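/- arXiv:2307.09894 — 9 statements merged into one kernel-verified Lean document; each statement's English description precedes it below -/
import Mathlib

section
/- For every N and f, and every sparse subset J of [N-1] with |J| = k, the number of matchings on [N] with exactly f unmatched vertices whose set of short chords contains J equals the number of matchings on [N-2k] with exactly f unmatched vertices. -/
/-- The set of endpoints of a finite set of chords (unordered pairs). -/
def endpointSet (R : Finset (Sym2 ℕ)) : Set ℕ := {x | ∃ c ∈ R, x ∈ c}

/-- A matching on the vertex set `S`: a finite set of pairwise disjoint chords
(unordered pairs of distinct elements of `S`).  Vertices of `S` not covered by
any chord are the unmatched vertices. -/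
structure MatchingOn (S : Finset ℕ) where
  chords : Finset (Sym2 ℕ)
  not_diag : ∀ c ∈ chords, ¬ c.IsDiag
  mem_support : ∀ c ∈ chords, ∀ x ∈ c, x ∈ S
  disj : ∀ c ∈ chords, ∀ c' ∈ chords, c ≠ c' → ∀ x ∈ c, x ∉ c'

/-- The number of unmatched vertices of a matching. -/
noncomputable def unmatchedCard {S : Finset ℕ} (m : MatchingOn S) : ℕ :=
  ((S : Set ℕ) \ endpointSet m.chords).ncard

namespace Stmt0Aux

lemma MatchingOn.ext' {S : Finset ℕ} {m m' : MatchingOn S} (h : m.chords = m'.chords) :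
    m = m' := by
  cases m; cases m'; simpa using h

/-- Insertion relabeling. -/
def ψ (j : ℕ) : ℕ → ℕ := fun x => if x < j then x else x + 2

/-- Deletion relabeling. -/
def φ (j : ℕ) : ℕ → ℕ := fun x => if x < j then x else x - 2

lemma psi_inj (j : ℕ) : Function.Injective (ψ j) := by
  intro a b h
  unfold ψ at h
  split_ifs at h <;> omega

lemma psi_ne (j x : ℕ) : ψ j x ≠ j ∧ ψ j x ≠ j + 1 := by
  unfold ψ; split_ifs <;> omega

lemma psi_phi (j x : ℕ) (h1 : x ≠ j) (h2 : x ≠ j + 1) : ψ j (φ j x) = x := by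
  unfold ψ φ; split_ifs <;> omega

lemma psi_lt (j i : ℕ) (h : i < j) : ψ j i = i := by unfold ψ; split_ifs <;> omega

lemma psi_mem {N j : ℕ} (hj : 1 ≤ j) (hjN : j + 1 ≤ N) {x : ℕ} (hx : x ∈ Finset.Icc 1 (N - 2)) :
    ψ j x ∈ Finset.Icc 1 N := by
  simp only [Finset.mem_Icc] at hx ⊢
  unfold ψ; split_ifs <;> omega

/-- Insert the chord `s(j, j+1)` into a matching on `[1, N-2]`, shifting labels `≥ j` up
by 2, to get a matching on `[1, N]`. -/
def ins (N j : ℕ) (hj : 1 ≤ j) (hjN : j + 1 ≤ N) (m : MatchingOn (Finset.Icc 1 (N - 2))) :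
    MatchingOn (Finset.Icc 1 N) where
  chords := insert s(j, j + 1) (m.chords.image (Sym2.map (ψ j)))
  not_diag := by
    intro c hc
    rcases Finset.mem_insert.mp hc with rfl | hc
    · simp [Sym2.mk_isDiag_iff]
    · rcases Finset.mem_image.mp hc with ⟨d, hd, rfl⟩
      rw [Sym2.isDiag_map (psi_inj j)]
      exact m.not_diag d hd
  mem_support := by
    intro c hc x hx
    rcases Finset.mem_insert.mp hc with rfl | hc
    · rcases Sym2.mem_iff.mp hx with rfl | rfl <;> simp only [Finset.mem_Icc] <;> omega
    · rcases Finset.mem_image.mp hc with ⟨d, hd, rfl⟩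
      rcases Sym2.mem_map.mp hx with ⟨y, hy, rfl⟩
      exact psi_mem hj hjN (m.mem_support d hd y hy)
  disj := by
    intro c hc c' hc' hne x hx hx'
    rcases Finset.mem_insert.mp hc with rfl | hc <;>
      rcases Finset.mem_insert.mp hc' with rfl | hc'
    · exact hne rfl
    · rcases Finset.mem_image.mp hc' with ⟨d, hd, rfl⟩
      rcases Sym2.mem_map.mp hx' with ⟨y, hy, hxy⟩
      rcases Sym2.mem_iff.mp hx with h | h
      · exact (psi_ne j y).1 (hxy.trans h)
      · exact (psi_ne j y).2 (hxy.trans h)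
    · rcases Finset.mem_image.mp hc with ⟨d, hd, hde⟩
      subst hde
      rcases Sym2.mem_map.mp hx with ⟨y, hy, hxy⟩
      rcases Sym2.mem_iff.mp hx' with h | h
      · exact (psi_ne j y).1 (hxy.trans h)
      · exact (psi_ne j y).2 (hxy.trans h)
    · rcases Finset.mem_image.mp hc with ⟨d, hd, rfl⟩
      rcases Finset.mem_image.mp hc' with ⟨d', hd', rfl⟩
      rcases Sym2.mem_map.mp hx with ⟨y, hy, rfl⟩
      rcases Sym2.mem_map.mp hx' with ⟨y', hy', h⟩
      have hdne : d ≠ d' := by rintro rfl; exact hne rfl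
      have : y' = y := psi_inj j h
      subst this
      exact m.disj d hd d' hd' hdne y' hy hy'

lemma jchord_mem_ins (hj : 1 ≤ j) (hjN : j + 1 ≤ N) (m : MatchingOn (Finset.Icc 1 (N - 2))) :
    s(j, j + 1) ∈ (ins N j hj hjN m).chords := Finset.mem_insert_self _ _

lemma jchord_not_mem_image (m : Finset (Sym2 ℕ)) :
    s(j, j + 1) ∉ m.image (Sym2.map (ψ j)) := by
  intro h
  rcases Finset.mem_image.mp h with ⟨d, _, hd⟩
  have hjmem : j ∈ Sym2.map (ψ j) d := by rw [hd]; simp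
  rcases Sym2.mem_map.mp hjmem with ⟨y, _, hy⟩
  exact (psi_ne j y).1 hy

lemma endpoint_ins (hj : 1 ≤ j) (hjN : j + 1 ≤ N) (m : MatchingOn (Finset.Icc 1 (N - 2))) :
    endpointSet (ins N j hj hjN m).chords = {j, j + 1} ∪ ψ j '' endpointSet m.chords := by
  ext x
  constructor
  · rintro ⟨c, hc, hx⟩
    rcases Finset.mem_insert.mp hc with rfl | hc
    · rcases Sym2.mem_iff.mp hx with rfl | rfl
      · exact Or.inl (Or.inl rfl)
      · exact Or.inl (Or.inr rfl)
    · rcases Finset.mem_image.mp hc with ⟨d, hd, rfl⟩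
      rcases Sym2.mem_map.mp hx with ⟨y, hy, rfl⟩
      exact Or.inr ⟨y, ⟨d, hd, hy⟩, rfl⟩
  · rintro (hx | ⟨y, ⟨d, hd, hy⟩, rfl⟩)
    · refine ⟨s(j, j + 1), Finset.mem_insert_self _ _, ?_⟩
      rcases hx with rfl | rfl <;> simp
    · exact ⟨Sym2.map (ψ j) d, Finset.mem_insert_of_mem (Finset.mem_image_of_mem _ hd),
        Sym2.mem_map.mpr ⟨y, hy, rfl⟩⟩

lemma unmatched_ins (hj : 1 ≤ j) (hjN : j + 1 ≤ N) (m : MatchingOn (Finset.Icc 1 (N - 2))) :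
    unmatchedCard (ins N j hj hjN m) = unmatchedCard m := by
  unfold unmatchedCard
  rw [endpoint_ins]
  have key : (↑(Finset.Icc 1 N) : Set ℕ) \ ({j, j + 1} ∪ ψ j '' endpointSet m.chords)
      = ψ j '' ((↑(Finset.Icc 1 (N - 2)) : Set ℕ) \ endpointSet m.chords) := by
    ext x
    simp only [Set.mem_diff, Set.mem_union, Set.mem_insert_iff, Set.mem_singleton_iff,
      Set.mem_image, Finset.coe_Icc, Set.mem_Icc, not_or]
    constructor
    · rintro ⟨hxN, ⟨hxj, hxj1⟩, hximg⟩
      refine ⟨φ j x, ⟨?_, ?_⟩, psi_phi j x hxj hxj1⟩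
      · unfold φ; split_ifs <;> omega
      · intro hmem
        exact hximg ⟨φ j x, hmem, psi_phi j x hxj hxj1⟩
    · rintro ⟨y, ⟨hy, hyE⟩, rfl⟩
      refine ⟨?_, ⟨(psi_ne j y).1, (psi_ne j y).2⟩, ?_⟩
      · have := psi_mem hj hjN (x := y) (by simpa [Finset.mem_Icc] using hy)
        simpa [Finset.mem_Icc] using this
      · rintro ⟨z, hz, hzeq⟩
        rw [psi_inj j hzeq] at hz
        exact hyE hz
  rw [key, Set.ncard_image_of_injective _ (psi_inj j)]

lemma short_mem_ins_iff (hj : 1 ≤ j) (hjN : j + 1 ≤ N) (m : MatchingOn (Finset.Icc 1 (N - 2)))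
    {i : ℕ} (hi : i + 1 < j) :
    s(i, i + 1) ∈ (ins N j hj hjN m).chords ↔ s(i, i + 1) ∈ m.chords := by
  have hmap : Sym2.map (ψ j) s(i, i + 1) = s(i, i + 1) := by
    rw [Sym2.map_pair_eq, psi_lt j i (by omega), psi_lt j (i + 1) hi]
  constructor
  · intro h
    rcases Finset.mem_insert.mp h with h | h
    · exfalso
      have : i = j ∧ i + 1 = j + 1 ∨ i = j + 1 ∧ i + 1 = j := by
        rwa [Sym2.eq_iff] at h
      omega
    · rcases Finset.mem_image.mp h with ⟨d, hd, hde⟩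
      have : d = s(i, i + 1) := Sym2.map.injective (psi_inj j) (by rw [hde, hmap])
      rwa [this] at hd
  · intro h
    exact Finset.mem_insert_of_mem (Finset.mem_image.mpr ⟨s(i, i + 1), h, hmap⟩)

lemma step (N f j : ℕ) (hj : 1 ≤ j) (hjN : j + 1 ≤ N) (J : Finset ℕ)
    (hJ : ∀ i ∈ J, i + 1 < j) :
    Nat.card {m : MatchingOn (Finset.Icc 1 N) //
        (unmatchedCard m = f ∧ ∀ i ∈ J, s(i, i + 1) ∈ m.chords) ∧ s(j, j + 1) ∈ m.chords} =
    Nat.card {m : MatchingOn (Finset.Icc 1 (N - 2)) //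
        unmatchedCard m = f ∧ ∀ i ∈ J, s(i, i + 1) ∈ m.chords} := by
  symm
  apply Nat.card_congr
  refine Equiv.ofBijective (fun p => ⟨ins N j hj hjN p.1,
    ⟨⟨by rw [unmatched_ins]; exact p.2.1,
      fun i hi => (short_mem_ins_iff hj hjN p.1 (hJ i hi)).mpr (p.2.2 i hi)⟩,
      jchord_mem_ins hj hjN p.1⟩⟩) ⟨?_, ?_⟩
  · rintro ⟨m, hm⟩ ⟨m', hm'⟩ h
    simp only [Subtype.mk.injEq] at h ⊢
    apply MatchingOn.ext'
    have hch : (ins N j hj hjN m).chords = (ins N j hj hjN m').chords := by rw [h]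
    simp only [ins] at hch
    have h1 := jchord_not_mem_image (j := j) m.chords
    have h2 := jchord_not_mem_image (j := j) m'.chords
    have himg : m.chords.image (Sym2.map (ψ j)) = m'.chords.image (Sym2.map (ψ j)) := by
      have := congrArg (fun s => Finset.erase s s(j, j + 1)) hch
      simpa [Finset.erase_insert h1, Finset.erase_insert h2] using this
    exact Finset.image_injective (Sym2.map.injective (psi_inj j)) himg
  · rintro ⟨m, ⟨⟨hf, hJm⟩, hjm⟩⟩
    -- endpoints of chords other than s(j,j+1) avoid j and j+1
    have hkey : ∀ c ∈ m.chords.erase s(j, j + 1), ∀ x ∈ c,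
        x ∈ Finset.Icc 1 N ∧ x ≠ j ∧ x ≠ j + 1 := by
      intro c hc x hx
      obtain ⟨hcne, hcm⟩ := Finset.mem_erase.mp hc
      refine ⟨m.mem_support c hcm x hx, ?_, ?_⟩
      · intro hxx
        exact m.disj c hcm _ hjm hcne x hx (by rw [hxx]; simp)
      · intro hxx
        exact m.disj c hcm _ hjm hcne x hx (by rw [hxx]; simp)
    have hinv : ∀ c ∈ m.chords.erase s(j, j + 1), Sym2.map (ψ j) (Sym2.map (φ j) c) = c := by
      intro c hc
      induction c using Sym2.ind with
      | _ a b =>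
        rw [Sym2.map_pair_eq, Sym2.map_pair_eq]
        have ha := hkey _ hc a (by simp)
        have hb := hkey _ hc b (by simp)
        rw [psi_phi j a ha.2.1 ha.2.2, psi_phi j b hb.2.1 hb.2.2]
    -- injectivity of φ on endpoints
    have hphiinj : ∀ x y : ℕ, x ≠ j → x ≠ j + 1 → y ≠ j → y ≠ j + 1 → φ j x = φ j y → x = y := by
      intro x y hx1 hx2 hy1 hy2 h
      have := congrArg (ψ j) h
      rwa [psi_phi j x hx1 hx2, psi_phi j y hy1 hy2] at this
    set C : Finset (Sym2 ℕ) := (m.chords.erase s(j, j + 1)).image (Sym2.map (φ j)) with hC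
    have ax1 : ∀ c ∈ C, ¬ c.IsDiag := by
      intro c hc
      rcases Finset.mem_image.mp hc with ⟨d, hd, rfl⟩
      induction d using Sym2.ind with
      | _ a b =>
        rw [Sym2.map_pair_eq, Sym2.mk_isDiag_iff]
        intro hab
        have ha := hkey _ hd a (by simp)
        have hb := hkey _ hd b (by simp)
        have : a = b := hphiinj a b ha.2.1 ha.2.2 hb.2.1 hb.2.2 hab
        exact m.not_diag _ (Finset.mem_erase.mp hd).2 (by rw [this]; simp)
    have ax2 : ∀ c ∈ C, ∀ x ∈ c, x ∈ Finset.Icc 1 (N - 2) := by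
      intro c hc x hx
      rcases Finset.mem_image.mp hc with ⟨d, hd, rfl⟩
      rcases Sym2.mem_map.mp hx with ⟨y, hy, rfl⟩
      have hy' := hkey _ hd y hy
      simp only [Finset.mem_Icc] at hy' ⊢
      unfold φ; split_ifs <;> omega
    have ax3 : ∀ c ∈ C, ∀ c' ∈ C, c ≠ c' → ∀ x ∈ c, x ∉ c' := by
      intro c hc c' hc' hne x hx hx'
      rcases Finset.mem_image.mp hc with ⟨d, hd, rfl⟩
      rcases Finset.mem_image.mp hc' with ⟨d', hd', rfl⟩
      rcases Sym2.mem_map.mp hx with ⟨y, hy, rfl⟩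
      rcases Sym2.mem_map.mp hx' with ⟨y', hy', h⟩
      have hdne : d ≠ d' := by rintro rfl; exact hne rfl
      have hyy : y' = y := by
        have h1 := hkey _ hd y hy
        have h2 := hkey _ hd' y' hy'
        exact hphiinj y' y h2.2.1 h2.2.2 h1.2.1 h1.2.2 h
      subst hyy
      exact m.disj d (Finset.mem_erase.mp hd).2 d' (Finset.mem_erase.mp hd').2 hdne y' hy hy'
    set m₀ : MatchingOn (Finset.Icc 1 (N - 2)) := ⟨C, ax1, ax2, ax3⟩ with hm₀
    have hins : ins N j hj hjN m₀ = m := by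
      apply MatchingOn.ext'
      show insert s(j, j + 1) (C.image (Sym2.map (ψ j))) = m.chords
      rw [hC, Finset.image_image]
      have heq : (m.chords.erase s(j, j + 1)).image (Sym2.map (ψ j) ∘ Sym2.map (φ j))
          = (m.chords.erase s(j, j + 1)).image id := by
        apply Finset.image_congr
        intro c hc
        simpa using hinv c hc
      rw [heq, Finset.image_id, Finset.insert_erase hjm]
    refine ⟨⟨m₀, ?_, ?_⟩, ?_⟩
    · rw [← unmatched_ins hj hjN m₀, hins]; exact hf
    · intro i hi
      exact (short_mem_ins_iff hj hjN m₀ (hJ i hi)).mp (by rw [hins]; exact hJm i hi)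
    · exact Subtype.ext hins

end Stmt0Aux

/-- For every sparse subset `J` of `[N-1]` with `|J| = k`, the number of matchings on
`[N]` with exactly `f` unmatched vertices whose set of short chords contains `J`
equals the number of matchings on `[N-2k]` with exactly `f` unmatched vertices. -/
theorem stmt0 (N f : ℕ) (J : Finset ℕ) (hJ : J ⊆ Finset.Icc 1 (N - 1))
    (hsparse : ∀ j ∈ J, j + 1 ∉ J) :
    Nat.card {m : MatchingOn (Finset.Icc 1 N) //
        unmatchedCard m = f ∧ ∀ j ∈ J, s(j, j + 1) ∈ m.chords} =
    Nat.card {m : MatchingOn (Finset.Icc 1 (N - 2 * J.card)) // unmatchedCard m = f} := by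
  open Stmt0Aux in
  suffices H : ∀ k N (J : Finset ℕ), J.card = k → J ⊆ Finset.Icc 1 (N - 1) →
      (∀ j ∈ J, j + 1 ∉ J) →
      Nat.card {m : MatchingOn (Finset.Icc 1 N) //
        unmatchedCard m = f ∧ ∀ j ∈ J, s(j, j + 1) ∈ m.chords} =
      Nat.card {m : MatchingOn (Finset.Icc 1 (N - 2 * J.card)) // unmatchedCard m = f} by
    exact H J.card N J rfl hJ hsparse
  intro k
  induction k with
  | zero =>
    intro N J hk _ _
    have hJe : J = ∅ := Finset.card_eq_zero.mp hk
    subst hJe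
    simp only [Finset.card_empty, Nat.mul_zero, Nat.sub_zero]
    exact Nat.card_congr (Equiv.subtypeEquivRight (by simp))
  | succ k ih =>
    intro N J hk hJ hs
    have hne : J.Nonempty := Finset.card_pos.mp (by omega)
    set j := J.max' hne with hjdef
    have hjJ : j ∈ J := J.max'_mem hne
    have hjIcc := Finset.mem_Icc.mp (hJ hjJ)
    have hj1 : 1 ≤ j := hjIcc.1
    have hjN : j + 1 ≤ N := by omega
    set J' := J.erase j with hJ'def
    have hJ'card : J'.card = k := by
      rw [hJ'def, Finset.card_erase_of_mem hjJ, hk]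
      omega
    have hJ'lt : ∀ i ∈ J', i + 1 < j := by
      intro i hi
      obtain ⟨hine, hiJ⟩ := Finset.mem_erase.mp hi
      have hile : i ≤ j := J.le_max' i hiJ
      have : i + 1 ≠ j := by
        intro h
        exact hs i hiJ (h ▸ hjJ)
      omega
    have e1 : Nat.card {m : MatchingOn (Finset.Icc 1 N) //
          unmatchedCard m = f ∧ ∀ i ∈ J, s(i, i + 1) ∈ m.chords} =
        Nat.card {m : MatchingOn (Finset.Icc 1 N) //
          (unmatchedCard m = f ∧ ∀ i ∈ J', s(i, i + 1) ∈ m.chords) ∧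
            s(j, j + 1) ∈ m.chords} := by
      apply Nat.card_congr
      apply Equiv.subtypeEquivRight
      intro m
      constructor
      · rintro ⟨h1, h2⟩
        exact ⟨⟨h1, fun i hi => h2 i (Finset.mem_erase.mp hi).2⟩, h2 j hjJ⟩
      · rintro ⟨⟨h1, h2⟩, h3⟩
        refine ⟨h1, fun i hi => ?_⟩
        rcases eq_or_ne i j with rfl | hne'
        · exact h3
        · exact h2 i (Finset.mem_erase.mpr ⟨hne', hi⟩)
    rw [e1, Stmt0Aux.step N f j hj1 hjN J' hJ'lt]
    have e2 := ih (N - 2) J' hJ'card ?_ ?_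
    · rw [e2, hJ'card, hk, show N - 2 - 2 * k = N - 2 * (k + 1) from by omega]
    · intro i hi
      have h1 := Finset.mem_Icc.mp (hJ (Finset.mem_erase.mp hi).2)
      have h2 := hJ'lt i hi
      have h3 := hjIcc.2
      exact Finset.mem_Icc.mpr ⟨h1.1, by omega⟩
    · intro i hi
      intro h
      exact hs i (Finset.mem_erase.mp hi).2 (Finset.mem_erase.mp h).2
end

section
/- The number of standard Young tableaux T of shape (k1, k2) (with k1 ≥ k2) whose descent set contains a given set J ⊆ [k1+k2-1] equals the number of standard Young tableaux of shape (k1+1, k2+1) whose descent set contains {1} ∪ (J+2), where J+2 = {j+2 : j ∈ J}. -/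
/-- A standard Young tableau of two-row shape `(a, b)` (with `b ≤ a`), encoded by the
set `R ⊆ {1, …, a+b}` of entries of its second row.  The requirement is that `R` has
`b` elements and among the entries `1, …, t` at most half lie in the second row
(the ballot condition), for every `t`. -/
def IsTwoRowSYT (a b : ℕ) (R : Finset ℕ) : Prop :=
  b ≤ a ∧ R ⊆ Finset.Icc 1 (a + b) ∧ R.card = b ∧
    ∀ t, 2 * (R ∩ Finset.Icc 1 t).card ≤ t

/-- The descent set of a two-row SYT with `N` entries and second row `R`:
those `i ∈ [N-1]` lying in the first row with `i+1` in the second row. -/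
def DesSet (N : ℕ) (R : Finset ℕ) : Finset ℕ :=
  (Finset.Icc 1 (N - 1)).filter fun i => i ∉ R ∧ i + 1 ∈ R

section aux

private def fwd (R : Finset ℕ) : Finset ℕ := insert 2 (R.image (· + 2))
private def bwd (R : Finset ℕ) : Finset ℕ := (R.erase 2).image (· - 2)

private lemma mem_fwd {R : Finset ℕ} {x : ℕ} :
    x ∈ fwd R ↔ x = 2 ∨ ∃ r ∈ R, r + 2 = x := by
  simp [fwd]

private lemma mem_bwd {R : Finset ℕ} {x : ℕ} :
    x ∈ bwd R ↔ ∃ y ∈ R, y ≠ 2 ∧ y - 2 = x := by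
  simp only [bwd, Finset.mem_image, Finset.mem_erase]
  constructor
  · rintro ⟨y, ⟨hy2, hy⟩, hx⟩; exact ⟨y, hy, hy2, hx⟩
  · rintro ⟨y, hy, hy2, hx⟩; exact ⟨y, ⟨hy2, hy⟩, hx⟩

private lemma fwd_good {k1 k2 : ℕ} {J R : Finset ℕ}
    (hJ : J ⊆ Finset.Icc 1 (k1 + k2 - 1))
    (hR : IsTwoRowSYT k1 k2 R ∧ J ⊆ DesSet (k1 + k2) R) :
    IsTwoRowSYT (k1 + 1) (k2 + 1) (fwd R) ∧
      insert 1 (J.image (· + 2)) ⊆ DesSet (k1 + k2 + 2) (fwd R) := by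
  obtain ⟨⟨hba, hsub, hcard, hball⟩, hdes⟩ := hR
  have hmem : ∀ r ∈ R, 1 ≤ r ∧ r ≤ k1 + k2 := by
    intro r hr; simpa using hsub hr
  refine ⟨⟨by omega, ?_, ?_, ?_⟩, ?_⟩
  · intro x hx
    rw [mem_fwd] at hx
    simp only [Finset.mem_Icc]
    rcases hx with rfl | ⟨r, hr, rfl⟩
    · omega
    · have := hmem r hr; omega
  · rw [fwd, Finset.card_insert_of_notMem, Finset.card_image_of_injective _
      (add_left_injective 2), hcard]
    simp only [Finset.mem_image]
    rintro ⟨r, hr, hr2⟩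
    have := hmem r hr; omega
  · intro t
    rcases Nat.lt_or_ge t 2 with ht | ht
    · have : fwd R ∩ Finset.Icc 1 t = ∅ := by
        ext x
        simp only [Finset.mem_inter, mem_fwd, Finset.mem_Icc, Finset.notMem_empty,
          iff_false]
        rintro ⟨(rfl | ⟨r, hr, rfl⟩), hx⟩ <;> omega
      rw [this]; simp
    · have key : fwd R ∩ Finset.Icc 1 t = fwd (R ∩ Finset.Icc 1 (t - 2)) := by
        ext x
        simp only [Finset.mem_inter, mem_fwd, Finset.mem_Icc]
        constructor
        · rintro ⟨(rfl | ⟨r, hr, rfl⟩), hx⟩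
          · left; rfl
          · right; exact ⟨r, ⟨hr, (hmem r hr).1, by omega⟩, rfl⟩
        · rintro (rfl | ⟨r, ⟨hr, h1, h2⟩, rfl⟩)
          · exact ⟨Or.inl rfl, by omega⟩
          · exact ⟨Or.inr ⟨r, hr, rfl⟩, by omega⟩
      rw [key, fwd, Finset.card_insert_of_notMem, Finset.card_image_of_injective _
        (add_left_injective 2)]
      · have := hball (t - 2); omega
      · simp only [Finset.mem_image, Finset.mem_inter, Finset.mem_Icc]
        rintro ⟨r, ⟨hr, _⟩, hr2⟩
        have := hmem r hr; omega
  · intro x hx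
    simp only [Finset.mem_insert, Finset.mem_image] at hx
    have h2 : (2:ℕ) ∈ fwd R := by rw [mem_fwd]; left; rfl
    have h1 : (1:ℕ) ∉ fwd R := by
      rw [mem_fwd]; push_neg
      exact ⟨by omega, fun r hr => by omega⟩
    rcases hx with rfl | ⟨j, hj, rfl⟩
    · simp only [DesSet, Finset.mem_filter, Finset.mem_Icc]
      exact ⟨⟨le_refl 1, by omega⟩, h1, h2⟩
    · have hjd := hdes hj
      simp only [DesSet, Finset.mem_filter, Finset.mem_Icc] at hjd ⊢
      obtain ⟨⟨hj1, hj2⟩, hjR, hjR1⟩ := hjd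
      refine ⟨⟨by omega, by omega⟩, ?_, ?_⟩
      · rw [mem_fwd]; push_neg
        refine ⟨by omega, fun r hr hre => ?_⟩
        have : r = j := by omega
        subst this; exact hjR hr
      · rw [mem_fwd]; right; exact ⟨j + 1, hjR1, by omega⟩

private lemma bwd_good {k1 k2 : ℕ} {J R : Finset ℕ}
    (hJ : J ⊆ Finset.Icc 1 (k1 + k2 - 1))
    (hR : IsTwoRowSYT (k1 + 1) (k2 + 1) R ∧
      insert 1 (J.image (· + 2)) ⊆ DesSet (k1 + k2 + 2) R) :
    IsTwoRowSYT k1 k2 (bwd R) ∧ J ⊆ DesSet (k1 + k2) (bwd R) := by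
  obtain ⟨⟨hba, hsub, hcard, hball⟩, hdes⟩ := hR
  have h1d : (1:ℕ) ∈ DesSet (k1 + k2 + 2) R := hdes (Finset.mem_insert_self 1 _)
  simp only [DesSet, Finset.mem_filter, Finset.mem_Icc] at h1d
  obtain ⟨-, h1, h2⟩ := h1d
  have hmem : ∀ r ∈ R, 1 ≤ r ∧ r ≤ k1 + k2 + 2 := by
    intro r hr
    have := hsub hr
    simp only [Finset.mem_Icc] at this
    omega
  have hge3 : ∀ r ∈ R, r ≠ 2 → 3 ≤ r := by
    intro r hr hr2
    have := hmem r hr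
    have hne1 : r ≠ 1 := fun e => h1 (e ▸ hr)
    omega
  have hinj : ∀ s : Finset ℕ, (∀ x ∈ s, 3 ≤ x) → (s.image (· - 2)).card = s.card := by
    intro s hs
    apply Finset.card_image_of_injOn
    intro x hx y hy hxy
    have := hs x hx; have := hs y hy
    simp only at hxy; omega
  refine ⟨⟨by omega, ?_, ?_, ?_⟩, ?_⟩
  · intro x hx
    rw [mem_bwd] at hx
    obtain ⟨y, hy, hy2, rfl⟩ := hx
    have := hmem y hy
    have := hge3 y hy hy2
    simp only [Finset.mem_Icc]; omega
  · rw [bwd, hinj _ (fun x hx => hge3 x (Finset.mem_of_mem_erase hx)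
      (Finset.ne_of_mem_erase hx)), Finset.card_erase_of_mem h2, hcard]
    omega
  · intro t
    have key : bwd R ∩ Finset.Icc 1 t = (R ∩ Finset.Icc 3 (t + 2)).image (· - 2) := by
      ext x
      simp only [Finset.mem_inter, mem_bwd, Finset.mem_Icc, Finset.mem_image]
      constructor
      · rintro ⟨⟨y, hy, hy2, rfl⟩, hx1, hx2⟩
        have := hge3 y hy hy2
        exact ⟨y, ⟨hy, this, by omega⟩, rfl⟩
      · rintro ⟨y, ⟨hy, hy3, hy2⟩, rfl⟩
        exact ⟨⟨y, hy, by omega, rfl⟩, by omega, by omega⟩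
    have key2 : R ∩ Finset.Icc 1 (t + 2) = insert 2 (R ∩ Finset.Icc 3 (t + 2)) := by
      ext x
      simp only [Finset.mem_inter, Finset.mem_Icc, Finset.mem_insert]
      constructor
      · rintro ⟨hx, hx1, hx2⟩
        rcases eq_or_ne x 2 with rfl | hne
        · left; rfl
        · right; exact ⟨hx, hge3 x hx hne, hx2⟩
      · rintro (rfl | ⟨hx, hx3, hx2⟩)
        · exact ⟨h2, by omega⟩
        · exact ⟨hx, by omega, hx2⟩
    have hni : (2:ℕ) ∉ R ∩ Finset.Icc 3 (t + 2) := by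
      simp only [Finset.mem_inter, Finset.mem_Icc]; omega
    have hb := hball (t + 2)
    rw [key2, Finset.card_insert_of_notMem hni] at hb
    rw [key, hinj _ (fun x hx => (Finset.mem_Icc.mp (Finset.mem_inter.mp hx).2).1)]
    omega
  · intro j hj
    have hjd := hdes (Finset.mem_insert_of_mem (Finset.mem_image_of_mem _ hj))
    simp only [DesSet, Finset.mem_filter, Finset.mem_Icc] at hjd ⊢
    obtain ⟨⟨-, hj2⟩, hjR, hjR1⟩ := hjd
    have hjI := Finset.mem_Icc.mp (hJ hj)
    refine ⟨⟨hjI.1, ?_⟩, ?_, ?_⟩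
    · omega
    · rw [mem_bwd]; push_neg
      rintro y hy hy2 rfl
      have h3 := hge3 y hy hy2
      have he : y - 2 + 2 = y := by omega
      rw [he] at hjR
      exact hjR hy
    · rw [mem_bwd]
      exact ⟨j + 3, hjR1, by omega, by omega⟩

private lemma bwd_fwd (R : Finset ℕ) (hR : ∀ r ∈ R, 1 ≤ r) : bwd (fwd R) = R := by
  ext x
  rw [mem_bwd]
  constructor
  · rintro ⟨y, hy, hy2, rfl⟩
    rw [mem_fwd] at hy
    rcases hy with rfl | ⟨r, hr, rfl⟩
    · exact absurd rfl hy2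
    · simpa using hr
  · intro hx
    exact ⟨x + 2, mem_fwd.mpr (Or.inr ⟨x, hx, rfl⟩), by have := hR x hx; omega, by omega⟩

private lemma fwd_bwd (R : Finset ℕ) (hR1 : ∀ r ∈ R, 1 ≤ r) (h1 : 1 ∉ R)
    (h2 : 2 ∈ R) : fwd (bwd R) = R := by
  have hge3 : ∀ r ∈ R, r ≠ 2 → 3 ≤ r := by
    intro r hr hr2
    have := hR1 r hr
    have hne1 : r ≠ 1 := fun e => h1 (e ▸ hr)
    omega
  ext x
  rw [mem_fwd]
  constructor
  · rintro (rfl | ⟨r, hr, rfl⟩)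
    · exact h2
    · rw [mem_bwd] at hr
      obtain ⟨y, hy, hy2, rfl⟩ := hr
      have := hge3 y hy hy2
      have : y - 2 + 2 = y := by omega
      rwa [this]
  · intro hx
    rcases eq_or_ne x 2 with rfl | hne
    · left; rfl
    · right
      have h3 := hge3 x hx hne
      exact ⟨x - 2, mem_bwd.mpr ⟨x, hx, hne, rfl⟩, by omega⟩

end aux

/-- The number of SYTs of shape `(k1, k2)` whose descent set contains `J` equals the
number of SYTs of shape `(k1+1, k2+1)` whose descent set contains `{1} ∪ (J+2)`. -/
theorem stmt3 (k1 k2 : ℕ) (h : k2 ≤ k1) (J : Finset ℕ)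
    (hJ : J ⊆ Finset.Icc 1 (k1 + k2 - 1)) :
    Nat.card {R : Finset ℕ // IsTwoRowSYT k1 k2 R ∧ J ⊆ DesSet (k1 + k2) R} =
    Nat.card {R : Finset ℕ // IsTwoRowSYT (k1 + 1) (k2 + 1) R ∧
      insert 1 (J.image (· + 2)) ⊆ DesSet (k1 + k2 + 2) R} := by
  apply Nat.card_congr
  refine ⟨fun x => ⟨fwd x.1, fwd_good hJ x.2⟩, fun x => ⟨bwd x.1, bwd_good hJ x.2⟩,
    ?_, ?_⟩
  · rintro ⟨R, hR⟩
    simp only [Subtype.mk.injEq]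
    exact bwd_fwd R (fun r hr => (Finset.mem_Icc.mp (hR.1.2.1 hr)).1)
  · rintro ⟨R, hR⟩
    simp only [Subtype.mk.injEq]
    have h1d : (1:ℕ) ∈ DesSet (k1 + k2 + 2) R := hR.2 (Finset.mem_insert_self 1 _)
    simp only [DesSet, Finset.mem_filter] at h1d
    exact fwd_bwd R (fun r hr => (Finset.mem_Icc.mp (hR.1.2.1 hr)).1) h1d.2.1 h1d.2.2
end

section
/- Let λ = (N-k1, k1) and μ = (N-k2, k2) be two-row partitions of N. If T is a standard Young tableau of shape μ with Des(T) = {1, 3, ..., 2k1-1}, then k1 = k2 and T is the column superstandard tableau of shape λ. -/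
/-- If a standard Young tableau of shape `(N-k2, k2)` has descent set
`{1, 3, …, 2k1-1}`, then `k1 = k2` and the tableau is the column superstandard
tableau of shape `(N-k1, k1)` (second row `{2, 4, …, 2k1}`). -/
theorem stmt5 (N k1 k2 : ℕ) (h1 : 2 * k1 ≤ N) (h2 : 2 * k2 ≤ N) (R : Finset ℕ)
    (hR : IsTwoRowSYT (N - k2) k2 R)
    (hdes : DesSet N R = (Finset.range k1).image fun j => 2 * j + 1) :
    k1 = k2 ∧ R = (Finset.range k1).image fun j => 2 * j + 2 := by
  obtain ⟨hba, hsub, hcard, hballot⟩ := hR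
  have hNk : N - k2 + k2 = N := Nat.sub_add_cancel (by omega)
  rw [hNk] at hsub
  -- every {2, 4, ..., 2k1} is in R, from the descent condition
  have hback : ∀ j, j < k1 → 2 * j + 2 ∈ R := by
    intro j hj
    have hmem : 2 * j + 1 ∈ DesSet N R := by
      rw [hdes]; exact Finset.mem_image.mpr ⟨j, Finset.mem_range.mpr hj, rfl⟩
    have h := (Finset.mem_filter.mp hmem).2.2
    have e : 2 * j + 1 + 1 = 2 * j + 2 := by omega
    rwa [e] at h
  -- every element of R is of the form 2j+2 with j < k1
  have hfwd : ∀ m, m ∈ R → ∃ j, j < k1 ∧ m = 2 * j + 2 := by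
    intro m
    induction m using Nat.strong_induction_on with
    | _ m ih =>
      intro hm
      have hIcc := Finset.mem_Icc.mp (hsub hm)
      have hm1 : 1 ≤ m := hIcc.1
      have hmN : m ≤ N := hIcc.2
      have hne1 : m ≠ 1 := by
        intro h; subst h
        have h1' := hballot 1
        have hmem : (1 : ℕ) ∈ R ∩ Finset.Icc 1 1 :=
          Finset.mem_inter.mpr ⟨hm, by simp⟩
        have hpos : 1 ≤ (R ∩ Finset.Icc 1 1).card :=
          Finset.card_pos.mpr ⟨1, hmem⟩
        omega
      have hm2 : 2 ≤ m := by omega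
      by_cases hpred : m - 1 ∈ R
      · obtain ⟨j, hj, hje⟩ := ih (m - 1) (by omega) hpred
        have hmval : m = 2 * j + 3 := by omega
        exfalso
        set S : Finset ℕ := (Finset.range (j + 1)).image (fun i => 2 * i + 2) ∪ {m}
          with hS
        have hsubS : S ⊆ R ∩ Finset.Icc 1 m := by
          intro x hx
          rcases Finset.mem_union.mp hx with hx | hx
          · obtain ⟨i, hi, rfl⟩ := Finset.mem_image.mp hx
            have hi' : i < j + 1 := Finset.mem_range.mp hi
            exact Finset.mem_inter.mpr
              ⟨hback i (by omega), Finset.mem_Icc.mpr ⟨by omega, by omega⟩⟩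
          · have hx' : x = m := Finset.mem_singleton.mp hx
            subst hx'
            exact Finset.mem_inter.mpr ⟨hm, Finset.mem_Icc.mpr ⟨by omega, le_refl _⟩⟩
        have hdisj : Disjoint ((Finset.range (j + 1)).image (fun i => 2 * i + 2))
            ({m} : Finset ℕ) := by
          rw [Finset.disjoint_singleton_right]
          intro hmem
          obtain ⟨i, _, hie⟩ := Finset.mem_image.mp hmem
          omega
        have hcardS : S.card = j + 2 := by
          rw [hS, Finset.card_union_of_disjoint hdisj,
            Finset.card_image_of_injective _ (fun a b hab => by omega),
            Finset.card_range, Finset.card_singleton]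
        have hle := Finset.card_le_card hsubS
        have hb := hballot m
        omega
      · have hmem : m - 1 ∈ DesSet N R := by
          refine Finset.mem_filter.mpr ⟨Finset.mem_Icc.mpr ⟨by omega, by omega⟩,
            hpred, ?_⟩
          have e : m - 1 + 1 = m := by omega
          rwa [e]
        rw [hdes] at hmem
        obtain ⟨j, hj, hje⟩ := Finset.mem_image.mp hmem
        exact ⟨j, Finset.mem_range.mp hj, by omega⟩
  have hReq : R = (Finset.range k1).image fun j => 2 * j + 2 := by
    ext m
    simp only [Finset.mem_image, Finset.mem_range]
    constructor
    · intro hm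
      obtain ⟨j, hj, he⟩ := hfwd m hm
      exact ⟨j, hj, he.symm⟩
    · rintro ⟨j, hj, rfl⟩
      exact hback j hj
  refine ⟨?_, hReq⟩
  have hc : ((Finset.range k1).image fun j => 2 * j + 2).card = k1 := by
    rw [Finset.card_image_of_injective _ (fun a b hab => by omega),
      Finset.card_range]
  rw [hReq] at hcard
  omega
end

section
/- If μ and λ are partitions of N, T is a standard Young tableau of shape μ, and Des(T) equals the descent set of the column superstandard tableau T_λ, then μ ≥ λ in the conjugate order; moreover if μ = λ then T = T_λ. -/
/-- The entry of the column superstandard tableau of shape `μ` in row `i`, column `j`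
(rows and columns 0-indexed, entries 1-based): columns are filled one by one,
left to right, top to bottom. -/
def superEntry (μ : YoungDiagram) (i j : ℕ) : ℕ :=
  (∑ t ∈ Finset.range j, μ.colLen t) + i + 1

/-- The descent set of a filling `entry` of the Young diagram `μ`:
those values `v` such that `v + 1` appears in a strictly lower row than `v`. -/
def desOf (μ : YoungDiagram) (entry : ℕ → ℕ → ℕ) : Set ℕ :=
  {v | ∃ i1 j1 i2 j2, (i1, j1) ∈ μ ∧ (i2, j2) ∈ μ ∧
    entry i1 j1 = v ∧ entry i2 j2 = v + 1 ∧ i1 < i2}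

/-- A standard Young tableau of shape `μ` (a partition of `N`), given by its entry
function, which restricts to a bijection from the cells of `μ` to `{1, …, N}` and is
strictly increasing along rows and columns. -/
structure SYT (μ : YoungDiagram) where
  entry : ℕ → ℕ → ℕ
  bijOn : Set.BijOn (fun c : ℕ × ℕ => entry c.1 c.2) ↑μ.cells (Set.Icc 1 μ.cells.card)
  row_lt : ∀ i j1 j2, j1 < j2 → (i, j2) ∈ μ → entry i j1 < entry i j2
  col_lt : ∀ i1 i2 j, i1 < i2 → (i2, j) ∈ μ → entry i1 j < entry i2 j

/-- Partial column sums of a Young diagram. -/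
private def csum (lam : YoungDiagram) (k : ℕ) : ℕ := ∑ t ∈ Finset.range k, lam.colLen t

private lemma csum_succ (lam : YoungDiagram) (k : ℕ) :
    csum lam (k + 1) = csum lam k + lam.colLen k :=
  Finset.sum_range_succ _ _

private lemma csum_mono (lam : YoungDiagram) {m n : ℕ} (h : m ≤ n) :
    csum lam m ≤ csum lam n :=
  Finset.sum_le_sum_of_subset (Finset.range_subset_range.mpr h)

private lemma csum_eq_card_filter (lam : YoungDiagram) (m : ℕ) :
    csum lam m = (lam.cells.filter (fun c => c.2 < m)).card := by
  classical
  induction m with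
  | zero => simp [csum]
  | succ m ih =>
    have hsplit : lam.cells.filter (fun c => c.2 < m + 1)
        = lam.cells.filter (fun c => c.2 < m) ∪ lam.cells.filter (fun c => c.2 = m) := by
      rw [← Finset.filter_or]
      apply Finset.filter_congr
      intro c _
      constructor
      · intro h; omega
      · intro h; omega
    have hdisj : Disjoint (lam.cells.filter (fun c => c.2 < m))
        (lam.cells.filter (fun c => c.2 = m)) := by
      rw [Finset.disjoint_left]
      intro c hc1 hc2
      simp only [Finset.mem_filter] at hc1 hc2
      omega
    have hcol : lam.colLen m = (lam.cells.filter (fun c => c.2 = m)).card := by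
      rw [lam.colLen_eq_card]
      rfl
    rw [csum_succ, ih, hsplit, Finset.card_union_of_disjoint hdisj, hcol]

private lemma csum_le (lam : YoungDiagram) (m : ℕ) : csum lam m ≤ lam.cells.card := by
  rw [csum_eq_card_filter]
  exact Finset.card_filter_le _ _

private lemma csum_eq_of_colLen_zero (lam : YoungDiagram) {m : ℕ} (h : lam.colLen m = 0) :
    csum lam m = lam.cells.card := by
  classical
  rw [csum_eq_card_filter]
  congr 1
  apply Finset.filter_true_of_mem
  intro c hc
  by_contra hcm
  push_neg at hcm
  have h0 : (0, m) ∈ lam := lam.up_left_mem (Nat.zero_le _) hcm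
    (by rw [YoungDiagram.mem_cells] at hc; exact (show (c.1, c.2) ∈ lam from hc))
  rw [YoungDiagram.mem_iff_lt_colLen, h] at h0
  omega

/-- Entries strictly increase down a column, with increments at least one each step. -/
private lemma chain_le {μ : YoungDiagram} (T : SYT μ) :
    ∀ d s j, (s + d, j) ∈ μ → T.entry s j + d ≤ T.entry (s + d) j := by
  intro d
  induction d with
  | zero => intro s j _; simp
  | succ d ih =>
    intro s j h
    have hm : (s + d, j) ∈ μ := μ.up_left_mem (by omega) le_rfl h
    have h1 := ih s j hm
    have h2 := T.col_lt (s + d) (s + d + 1) j (by omega) (by exact h)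
    show T.entry s j + (d + 1) ≤ T.entry (s + d + 1) j
    omega

/-- If `μ`, `lam` are partitions of `N` and `T` is an SYT of shape `μ` whose descent
set equals that of the column superstandard tableau of shape `lam`, then `μ ≥ lam` in
the conjugate order; moreover if `μ = lam` then `T` is the column superstandard
tableau of shape `lam`. -/
theorem stmt7 (N : ℕ) (μ lam : YoungDiagram)
    (hμ : μ.cells.card = N) (hlam : lam.cells.card = N) (T : SYT μ)
    (hdes : desOf μ T.entry = desOf lam (superEntry lam)) :
    (μ = lam ∨
      ∃ i, (∀ j < i, μ.colLen j = lam.colLen j) ∧ lam.colLen i < μ.colLen i) ∧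
    (μ = lam → ∀ i j, (i, j) ∈ μ → T.entry i j = superEntry lam i j) := by
  classical
  -- abbreviation for the goal
  set G : Prop :=
    ((μ = lam ∨
      ∃ i, (∀ j < i, μ.colLen j = lam.colLen j) ∧ lam.colLen i < μ.colLen i) ∧
    (μ = lam → ∀ i j, (i, j) ∈ μ → T.entry i j = superEntry lam i j)) with hG
  -- basic facts about T
  have entry_mem : ∀ {i j : ℕ}, (i, j) ∈ μ → 1 ≤ T.entry i j ∧ T.entry i j ≤ N := by
    intro i j h
    have hmem : (i, j) ∈ (↑μ.cells : Set (ℕ × ℕ)) := by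
      simp [YoungDiagram.mem_cells, h]
    have := T.bijOn.mapsTo hmem
    rw [hμ] at this
    exact ⟨this.1, this.2⟩
  have exists_cell : ∀ v : ℕ, 1 ≤ v → v ≤ N → ∃ i j, (i, j) ∈ μ ∧ T.entry i j = v := by
    intro v h1 h2
    have : v ∈ Set.Icc 1 μ.cells.card := by rw [hμ]; exact ⟨h1, h2⟩
    obtain ⟨c, hc, hce⟩ := T.bijOn.surjOn this
    refine ⟨c.1, c.2, ?_, hce⟩
    simpa [YoungDiagram.mem_cells] using hc
  have inj2 : ∀ {i1 j1 i2 j2 : ℕ}, (i1, j1) ∈ μ → (i2, j2) ∈ μ →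
      T.entry i1 j1 = T.entry i2 j2 → i1 = i2 ∧ j1 = j2 := by
    intro i1 j1 i2 j2 h1 h2 he
    have hm1 : ((i1, j1) : ℕ × ℕ) ∈ (↑μ.cells : Set (ℕ × ℕ)) := by
      simp [YoungDiagram.mem_cells, h1]
    have hm2 : ((i2, j2) : ℕ × ℕ) ∈ (↑μ.cells : Set (ℕ × ℕ)) := by
      simp [YoungDiagram.mem_cells, h2]
    have := T.bijOn.injOn hm1 hm2 he
    exact ⟨congrArg Prod.fst this, congrArg Prod.snd this⟩
  -- the invariant
  set Inv : ℕ → Prop := fun k =>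
    (∀ j < k, μ.colLen j = lam.colLen j) ∧
    (∀ i j, (i, j) ∈ μ → j < k → T.entry i j = csum lam j + i + 1) ∧
    (∀ i j, (i, j) ∈ μ → T.entry i j ≤ csum lam k → j < k) with hInv
  -- final step: if the column length vanishes, we are done
  have final : ∀ k, lam.colLen k = 0 → Inv k → G := by
    intro k hc0 ⟨h1, h2, h3⟩
    have hSk : csum lam k = N := by rw [csum_eq_of_colLen_zero lam hc0, hlam]
    have allcol : ∀ i j, (i, j) ∈ μ → j < k := by
      intro i j hij
      exact h3 i j hij (by rw [hSk]; exact (entry_mem hij).2)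
    have mu_hi : ∀ j, k ≤ j → μ.colLen j = 0 := by
      intro j hj
      by_contra h
      have : (0, j) ∈ μ := YoungDiagram.mem_iff_lt_colLen.mpr (by omega)
      have := allcol 0 j this
      omega
    have lam_hi : ∀ j, k ≤ j → lam.colLen j = 0 := by
      intro j hj
      have := lam.colLen_anti k j hj
      omega
    have col_eq : ∀ j, μ.colLen j = lam.colLen j := by
      intro j
      by_cases hj : j < k
      · exact h1 j hj
      · rw [mu_hi j (by omega), lam_hi j (by omega)]
    have hμlam : μ = lam := by
      apply SetLike.ext
      rintro ⟨i, j⟩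
      rw [YoungDiagram.mem_iff_lt_colLen, YoungDiagram.mem_iff_lt_colLen, col_eq j]
    refine ⟨Or.inl hμlam, fun _ i j hij => ?_⟩
    show T.entry i j = (∑ t ∈ Finset.range j, lam.colLen t) + i + 1
    exact h2 i j hij (allcol i j hij)
  -- main step
  have step : ∀ k, 0 < lam.colLen k → Inv k → G ∨ Inv (k + 1) := by
    intro k hcpos ⟨h1, h2, h3⟩
    set c := lam.colLen k with hc
    -- entries ≤ csum lam k live in columns < k; contrapositive:
    have big_of_col : ∀ i j, (i, j) ∈ μ → k ≤ j → csum lam k < T.entry i j := by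
      intro i j hij hkj
      by_contra h
      push_neg at h
      have := h3 i j hij h
      omega
    -- entries in columns < k are at most csum lam k
    have small_of_col : ∀ i j, (i, j) ∈ μ → j < k → T.entry i j ≤ csum lam k := by
      intro i j hij hjk
      have he := h2 i j hij hjk
      have hi : i < lam.colLen j := by
        rw [← h1 j hjk, ← YoungDiagram.mem_iff_lt_colLen]
        exact hij
      have : csum lam j + lam.colLen j ≤ csum lam k := by
        rw [← csum_succ]
        exact csum_mono lam (by omega)
      omega
    have hSc : csum lam k + c ≤ N := by
      have := csum_le lam (k + 1)
      rw [csum_succ, hlam] at this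
      omega
    -- the key claim: column k of T is filled superstandardly
    have claim : ∀ t, t < c → (t, k) ∈ μ ∧ T.entry t k = csum lam k + t + 1 := by
      intro t
      induction t with
      | zero =>
        intro _
        obtain ⟨a, b, hab, he⟩ := exists_cell (csum lam k + 1) (by omega) (by omega)
        have hkb : k ≤ b := by
          by_contra h
          push_neg at h
          have := small_of_col a b hab h
          omega
        have ha0 : a = 0 := by
          by_contra h
          have h0b : (0, b) ∈ μ := μ.up_left_mem (Nat.zero_le _) le_rfl hab
          have hlt := T.col_lt 0 a b (by omega) hab
          have := big_of_col 0 b h0b hkb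
          omega
        subst ha0
        have hbk : b = k := by
          by_contra h
          have hkb' : k < b := by omega
          have h0k : (0, k) ∈ μ := μ.up_left_mem le_rfl (by omega) hab
          have hlt := T.row_lt 0 k b hkb' hab
          have := big_of_col 0 k h0k le_rfl
          omega
        rw [hbk] at hab he
        exact ⟨hab, by omega⟩
      | succ t ih =>
        intro ht
        obtain ⟨htk, hte⟩ := ih (by omega)
        -- csum lam k + t + 1 is a descent of the superstandard tableau of lam
        have hd : csum lam k + t + 1 ∈ desOf lam (superEntry lam) := by
          refine ⟨t, k, t + 1, k, ?_, ?_, ?_, ?_, by omega⟩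
          · exact YoungDiagram.mem_iff_lt_colLen.mpr (by omega)
          · exact YoungDiagram.mem_iff_lt_colLen.mpr (by omega)
          · rfl
          · show (∑ x ∈ Finset.range k, lam.colLen x) + (t + 1) + 1 = (csum lam k + t + 1) + 1
            show csum lam k + (t + 1) + 1 = (csum lam k + t + 1) + 1
            omega
        rw [← hdes] at hd
        obtain ⟨a1, b1, a2, b2, m1, m2, e1, e2, hlt⟩ := hd
        -- the cell with entry csum lam k + t + 1 is (t, k)
        obtain ⟨ha1, hb1⟩ := inj2 m1 htk (e1.trans hte.symm)
        have hlt' : t < a2 := ha1 ▸ hlt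
        -- locate the cell (a2, b2) of entry csum lam k + t + 2
        have hkb2 : k ≤ b2 := by
          by_contra h
          push_neg at h
          have := small_of_col a2 b2 m2 h
          have := csum_mono lam (le_refl k)
          omega
        have h0b2 : (0, b2) ∈ μ := μ.up_left_mem (Nat.zero_le _) le_rfl m2
        have hbig0 := big_of_col 0 b2 h0b2 hkb2
        have htb2 : (t, b2) ∈ μ := μ.up_left_mem (by omega) le_rfl m2
        -- chain inequalities
        have hch1 : T.entry 0 b2 + t ≤ T.entry t b2 := by
          have := chain_le T t 0 b2 (by simpa using htb2)
          simpa using this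
        have hch2 : T.entry t b2 + (a2 - t) ≤ T.entry a2 b2 := by
          have := chain_le T (a2 - t) t b2 (by
            have : t + (a2 - t) = a2 := by omega
            rw [this]; exact m2)
          have hta2 : t + (a2 - t) = a2 := by omega
          rwa [hta2] at this
        have ha2 : a2 = t + 1 := by omega
        have htb2e : T.entry t b2 = csum lam k + t + 1 := by omega
        obtain ⟨_, hb2k⟩ := inj2 htb2 htk (htb2e.trans hte.symm)
        rw [ha2, hb2k] at m2 e2
        exact ⟨m2, by omega⟩
    have hcol : c ≤ μ.colLen k := by
      have := (claim (c - 1) (by omega)).1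
      rw [YoungDiagram.mem_iff_lt_colLen] at this
      omega
    by_cases hstrict : c < μ.colLen k
    · -- strict inequality: the goal holds
      left
      rw [hG]
      constructor
      · exact Or.inr ⟨k, h1, hstrict⟩
      · intro heq
        exfalso
        rw [heq] at hstrict
        exact absurd hstrict (by omega)
    · -- equality: extend the invariant
      right
      have hcolk : μ.colLen k = c := by omega
      refine ⟨?_, ?_, ?_⟩
      · intro j hj
        by_cases hjk : j < k
        · exact h1 j hjk
        · have : j = k := by omega
          rw [this, hcolk]
      · intro i j hij hj
        by_cases hjk : j < k
        · exact h2 i j hij hjk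
        · have hjeq : j = k := by omega
          subst hjeq
          have hi : i < c := by
            rw [← hcolk, ← YoungDiagram.mem_iff_lt_colLen]
            exact hij
          exact (claim i hi).2
      · intro i j hij hle
        rw [csum_succ] at hle
        by_contra h
        push_neg at h
        have hjk : k ≤ j := by omega
        have hbig := big_of_col i j hij hjk
        set t := T.entry i j - csum lam k - 1 with htdef
        have htc : t < c := by omega
        have hteq : T.entry i j = csum lam k + t + 1 := by omega
        obtain ⟨htk, hte⟩ := claim t htc
        obtain ⟨_, hjk'⟩ := inj2 hij htk (hteq.trans hte.symm)
        omega
  -- the invariant holds at 0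
  have inv0 : Inv 0 := by
    refine ⟨by omega, by omega, ?_⟩
    intro i j hij hle
    have := (entry_mem hij).1
    have : csum lam 0 = 0 := by simp [csum]
    omega
  -- iterate
  have main : ∀ k, G ∨ Inv k := by
    intro k
    induction k with
    | zero => exact Or.inr inv0
    | succ k ih =>
      rcases ih with g | h
      · exact Or.inl g
      · by_cases hc : 0 < lam.colLen k
        · exact step k hc h
        · exact Or.inl (final k (by omega) h)
  -- lam.colLen N = 0
  have hlamN : lam.colLen N = 0 := by
    by_contra h
    have h0N : (0, N) ∈ lam := YoungDiagram.mem_iff_lt_colLen.mpr (by omega)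
    have hsub : (Finset.range (N + 1)).image (fun j => ((0, j) : ℕ × ℕ)) ⊆ lam.cells := by
      intro c hc
      simp only [Finset.mem_image, Finset.mem_range] at hc
      obtain ⟨j, hj, rfl⟩ := hc
      rw [YoungDiagram.mem_cells]
      exact lam.up_left_mem le_rfl (by omega) h0N
    have hcard : ((Finset.range (N + 1)).image (fun j => ((0, j) : ℕ × ℕ))).card = N + 1 := by
      rw [Finset.card_image_of_injective _ (fun a b hab => by simpa using hab)]
      simp
    have := Finset.card_le_card hsub
    rw [hcard, hlam] at this
    omega
  rcases main N with g | h
  · exact g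
  · exact final N hlamN h
end

section
/- The core of a matching is well-defined: any two maximal sequences of removals of short chords from a matching m on [N] remove exactly the same set of chords, hence yield the same set of stable (remaining) vertices. -/
/-- `c` has no element of `T` strictly between its endpoints. -/
def btwnFree (T : Set ℕ) (c : Sym2 ℕ) : Prop :=
  ¬ ∃ x ∈ T, ∃ a b, c = s(a, b) ∧ a < x ∧ x < b

/-- Given that the chords in `R` have already been removed, the chord `c` can be
removed: it is a chord of `m` not yet removed, with no surviving vertex strictly
between its endpoints. -/
def removable {S : Finset ℕ} (m : MatchingOn S) (R : Finset (Sym2 ℕ)) (c : Sym2 ℕ) : Prop :=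
  c ∈ m.chords ∧ c ∉ R ∧ btwnFree ((S : Set ℕ) \ endpointSet R) c

/-- `IsReduction m R L`: starting with the chords of `R` already removed, the list `L`
is a valid sequence of successive removals of short chords. -/
inductive IsReduction {S : Finset ℕ} (m : MatchingOn S) :
    Finset (Sym2 ℕ) → List (Sym2 ℕ) → Prop
  | nil (R : Finset (Sym2 ℕ)) : IsReduction m R []
  | cons (R : Finset (Sym2 ℕ)) (c : Sym2 ℕ) (L : List (Sym2 ℕ)) :
      removable m R c → IsReduction m (insert c R) L → IsReduction m R (c :: L)

/-- A maximal reduction process of `m`: a valid removal sequence starting from `m`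
after which no further chord can be removed. -/
def IsMaximalReduction {S : Finset ℕ} (m : MatchingOn S) (L : List (Sym2 ℕ)) : Prop :=
  IsReduction m ∅ L ∧ ∀ c, ¬ removable m L.toFinset c

lemma btwnFree_anti {T T' : Set ℕ} (h : T' ⊆ T) {c : Sym2 ℕ} (hc : btwnFree T c) :
    btwnFree T' c := fun ⟨x, hx, rest⟩ => hc ⟨x, h hx, rest⟩

lemma removable_mono {S : Finset ℕ} {m : MatchingOn S} {R F : Finset (Sym2 ℕ)} {c : Sym2 ℕ}
    (hRF : R ⊆ F) (hcF : c ∉ F) (h : removable m R c) : removable m F c := by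
  obtain ⟨h1, _, h3⟩ := h
  refine ⟨h1, hcF, btwnFree_anti ?_ h3⟩
  intro x hx
  exact ⟨hx.1, fun ⟨d, hd, hxd⟩ => hx.2 ⟨d, hRF hd, hxd⟩⟩

lemma reduction_subset {S : Finset ℕ} {m : MatchingOn S} {R F : Finset (Sym2 ℕ)}
    {L : List (Sym2 ℕ)} (h : IsReduction m R L) (hRF : R ⊆ F)
    (hmax : ∀ c, ¬ removable m F c) : ∀ c ∈ L, c ∈ F := by
  induction h with
  | nil R => simp
  | cons R c L hrem _ ih =>
    have hcF : c ∈ F := by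
      by_contra hcF
      exact hmax c (removable_mono hRF hcF hrem)
    intro d hd
    rcases List.mem_cons.mp hd with rfl | hd
    · exact hcF
    · exact ih (Finset.insert_subset hcF hRF) d hd

/-- The core is well-defined: any two maximal reduction processes of a matching
remove exactly the same set of chords, and hence leave the same set of stable
vertices. -/
theorem stmt8 (S : Finset ℕ) (m : MatchingOn S) (L1 L2 : List (Sym2 ℕ))
    (h1 : IsMaximalReduction m L1) (h2 : IsMaximalReduction m L2) :
    L1.toFinset = L2.toFinset ∧
      (S : Set ℕ) \ endpointSet L1.toFinset = (S : Set ℕ) \ endpointSet L2.toFinset := by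
  have key : L1.toFinset = L2.toFinset := by
    apply Finset.Subset.antisymm <;> intro c hc
    · exact reduction_subset h1.1 (Finset.empty_subset _) h2.2 c (List.mem_toFinset.mp hc)
    · exact reduction_subset h2.1 (Finset.empty_subset _) h1.2 c (List.mem_toFinset.mp hc)
  exact ⟨key, by rw [key]⟩
end

section
/- In any matching m on [N], if two chords intersect (i.e., there are i1 < i2 < i3 < i4 with (i1,i3) and (i2,i4) both chords of m), then both chords are stable: neither is ever removed during the reduction process of m. -/
/-- If two chords of a matching on `[N]` intersect, then neither of them is ever
removed during any reduction process of the matching. -/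
theorem stmt9 (N : ℕ) (m : MatchingOn (Finset.Icc 1 N)) (i1 i2 i3 i4 : ℕ)
    (h12 : i1 < i2) (h23 : i2 < i3) (h34 : i3 < i4)
    (hc1 : s(i1, i3) ∈ m.chords) (hc2 : s(i2, i4) ∈ m.chords)
    (L : List (Sym2 ℕ)) (hL : IsReduction m ∅ L) :
    s(i1, i3) ∉ L ∧ s(i2, i4) ∉ L := by
  suffices H : ∀ R L, IsReduction m R L → (↑R ⊆ m.chords) → s(i1, i3) ∉ R → s(i2, i4) ∉ R →
      s(i1, i3) ∉ L ∧ s(i2, i4) ∉ L by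
    exact H ∅ L hL (by simp) (by simp) (by simp)
  intro R L h
  induction h with
  | nil R => simp
  | cons R c L hrem hred ih =>
    intro hsub h1 h2
    have hsurv : ∀ j j', j < j' → s(j, j') ∈ m.chords → s(j, j') ∉ R →
        j ∈ ((Finset.Icc 1 N : Finset ℕ) : Set ℕ) \ endpointSet R ∧
        j' ∈ ((Finset.Icc 1 N : Finset ℕ) : Set ℕ) \ endpointSet R := by
      intro j j' _ hcm hcR
      constructor <;> refine ⟨by exact_mod_cast m.mem_support _ hcm _ (by simp), ?_⟩ <;>
      · rintro ⟨c', hc'R, hjc'⟩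
        have hc'm : c' ∈ m.chords := hsub hc'R
        by_cases hce : s(j, j') = c'
        · exact hcR (hce ▸ hc'R)
        · exact m.disj _ hcm _ hc'm hce _ (by simp) hjc'
    have hne1 : c ≠ s(i1, i3) := by
      rintro rfl
      exact hrem.2.2 ⟨i2, (hsurv i2 i4 (h23.trans h34) hc2 h2).1, i1, i3, rfl, h12, h23⟩
    have hne2 : c ≠ s(i2, i4) := by
      rintro rfl
      exact hrem.2.2 ⟨i3, (hsurv i1 i3 (h12.trans h23) hc1 h1).2, i2, i4, rfl, h23, h34⟩
    have := ih (by
        intro x hx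
        rcases Finset.mem_insert.mp hx with rfl | hx
        · exact hrem.1
        · exact hsub hx)
      (by simp [Finset.mem_insert, hne1.symm, h1, Ne.symm hne1])
      (by simp [Finset.mem_insert, hne2.symm, h2, Ne.symm hne2])
    refine ⟨?_, ?_⟩ <;> simp only [List.mem_cons, not_or] <;>
      exact ⟨by tauto, by tauto⟩
end

section
/- If m is a matching on [N], i < j, the interval [i,j] is m-invariant (every chord has both or neither endpoint in [i,j]), the restriction of m to [i,j] is a perfect matching (no unmatched vertex in [i,j]) and non-crossing, then every vertex of [i,j] is unstable in m. -/
/-- If the interval `[i, j]` is `m`-invariant and the restriction of `m` to it is a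
perfect non-crossing matching, then every vertex of `[i, j]` is unstable: it is
removed by every maximal reduction process. -/
theorem stmt11 (N i j : ℕ) (m : MatchingOn (Finset.Icc 1 N)) (hij : i < j)
    (hi : 1 ≤ i) (hj : j ≤ N)
    (hinv : ∀ c ∈ m.chords, ∀ a ∈ c, ∀ b ∈ c, (i ≤ a ∧ a ≤ j) → (i ≤ b ∧ b ≤ j))
    (hperf : ∀ x, i ≤ x → x ≤ j → ∃ c ∈ m.chords, x ∈ c)
    (hnc : ∀ a b c d : ℕ, i ≤ a → a < b → b < c → c < d → d ≤ j →
      s(a, c) ∈ m.chords → s(b, d) ∉ m.chords) :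
    ∀ x, i ≤ x → x ≤ j → ∀ L, IsMaximalReduction m L → x ∈ endpointSet L.toFinset := by
  classical
  intro x hxi hxj L hL
  obtain ⟨hred, hmax⟩ := hL
  by_contra hxsurv
  have exrep : ∀ c : Sym2 ℕ, ∃ p q, c = s(p, q) := Sym2.ind fun p q => ⟨p, q, rfl⟩
  -- width of a chord
  set wid : Sym2 ℕ → ℕ :=
    Sym2.lift ⟨fun a b => max a b - min a b, fun a b => by dsimp only; rw [sup_comm, inf_comm]⟩ with hwid
  have hwid_mk : ∀ a b : ℕ, wid s(a, b) = max a b - min a b := fun a b => rfl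
  -- candidate set: surviving chords with both endpoints in [i,j]
  set C := m.chords.filter
    (fun c => c ∉ L.toFinset ∧ ∀ y ∈ c, i ≤ y ∧ y ≤ j) with hCdef
  have hCmem : ∀ c, c ∈ C ↔ c ∈ m.chords ∧ c ∉ L.toFinset ∧ ∀ y ∈ c, i ≤ y ∧ y ≤ j := by
    intro c; simp [hCdef]
  -- C is nonempty
  have hCne : C.Nonempty := by
    obtain ⟨c₀, hc₀, hxc₀⟩ := hperf x hxi hxj
    refine ⟨c₀, (hCmem c₀).mpr ⟨hc₀, ?_, ?_⟩⟩
    · intro h; exact hxsurv ⟨c₀, h, hxc₀⟩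
    · intro y hy; exact hinv c₀ hc₀ x hxc₀ y hy ⟨hxi, hxj⟩
  obtain ⟨c, hcC, hmin⟩ := C.exists_min_image wid hCne
  obtain ⟨hc_mem, hc_notL, hc_rng⟩ := (hCmem c).mp hcC
  -- get an ordered representation of c
  obtain ⟨p, q, rfl⟩ := exrep c
  have hpq : p ≠ q := by
    intro h; exact m.not_diag _ hc_mem (Sym2.mk_isDiag_iff.mpr h)
  obtain ⟨a, b, hab, hcab⟩ : ∃ a b : ℕ, a < b ∧ s(p, q) = s(a, b) := by
    rcases lt_or_gt_of_ne hpq with h | h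
    · exact ⟨p, q, h, rfl⟩
    · exact ⟨q, p, h, Sym2.eq_swap⟩
  rw [hcab] at hc_mem hc_notL hc_rng hmin
  have hia : i ≤ a ∧ a ≤ j := hc_rng a (Sym2.mem_iff.mpr (Or.inl rfl))
  have hib : i ≤ b ∧ b ≤ j := hc_rng b (Sym2.mem_iff.mpr (Or.inr rfl))
  -- s(a,b) is removable, contradicting maximality
  refine hmax s(a, b) ⟨hc_mem, hc_notL, ?_⟩
  rintro ⟨x', hx'T, a', b', hce, h1, h2⟩
  obtain ⟨hx'S, hx'surv⟩ := hx'T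
  -- identify a' = a, b' = b
  have haa : a' = a ∧ b' = b := by
    rcases Sym2.eq_iff.mp hce with ⟨h3, h4⟩ | ⟨h3, h4⟩
    · exact ⟨h3.symm, h4.symm⟩
    · omega
  rw [haa.1] at h1
  rw [haa.2] at h2
  -- x' is a surviving vertex strictly between a and b, in [i,j]
  have hx'i : i ≤ x' := by omega
  have hx'j : x' ≤ j := by omega
  obtain ⟨c', hc', hx'c'⟩ := hperf x' hx'i hx'j
  have hc'L : c' ∉ L.toFinset := fun h => hx'surv ⟨c', h, hx'c'⟩
  -- write c' = s(x', y)
  obtain ⟨u, v, rfl⟩ := exrep c'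
  obtain ⟨y, hc'eq⟩ : ∃ y, s(u, v) = s(x', y) := by
    rcases Sym2.mem_iff.mp hx'c' with h | h
    · exact ⟨v, by rw [h]⟩
    · exact ⟨u, by rw [h]; exact Sym2.eq_swap⟩
  rw [hc'eq] at hc' hx'c' hc'L
  have hyij : i ≤ y ∧ y ≤ j :=
    hinv _ hc' x' hx'c' y (Sym2.mem_iff.mpr (Or.inr rfl)) ⟨hx'i, hx'j⟩
  have hyx' : y ≠ x' := by
    intro h; exact m.not_diag _ hc' (Sym2.mk_isDiag_iff.mpr h.symm)
  have hne : s(a, b) ≠ s(x', y) := by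
    intro h
    rcases Sym2.eq_iff.mp h with ⟨h3, h4⟩ | ⟨h3, h4⟩ <;> omega
  have hya : y ≠ a := by
    intro h
    exact m.disj _ hc_mem _ hc' hne a (Sym2.mem_iff.mpr (Or.inl rfl))
      (Sym2.mem_iff.mpr (Or.inr h.symm))
  have hyb : y ≠ b := by
    intro h
    exact m.disj _ hc_mem _ hc' hne b (Sym2.mem_iff.mpr (Or.inr rfl))
      (Sym2.mem_iff.mpr (Or.inr h.symm))
  -- y must lie strictly between a and b (non-crossing)
  have hyin : a < y ∧ y < b := by
    rcases lt_trichotomy y a with h | h | h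
    · exact absurd hc_mem (hnc y a x' b hyij.1 h h1 h2 hib.2
        (by rwa [Sym2.eq_swap] at hc'))
    · exact absurd h hya
    rcases lt_trichotomy y b with h' | h' | h'
    · exact ⟨h, h'⟩
    · exact absurd h' hyb
    · exact absurd hc' (hnc a x' b y hia.1 h1 h2 h' hyij.2 hc_mem)
  -- s(x', y) is a shorter chord in C: contradiction with minimality
  have hc'C : s(x', y) ∈ C := by
    refine (hCmem _).mpr ⟨hc', hc'L, ?_⟩
    intro z hz; exact hinv _ hc' x' hx'c' z hz ⟨hx'i, hx'j⟩
  have hle := hmin _ hc'C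
  rw [hwid_mk, hwid_mk] at hle
  have h5 : max x' y < b := by omega
  have h6 : a < min x' y := by omega
  have h7 : min x' y ≤ max x' y := min_le_max
  omega
end

section
/- For a matching m on [N], with T(m) the two-row standard Young tableau whose second row consists of the larger endpoints of the unstable chords of m, one has Des(T(m)) = Short(m). -/
lemma red_mem_chords {S : Finset ℕ} {m : MatchingOn S} {R : Finset (Sym2 ℕ)} {L : List (Sym2 ℕ)}
    (h : IsReduction m R L) : ∀ c ∈ L, c ∈ m.chords := by
  induction h with
  | nil => simp
  | cons R d L hrem hred ih =>
    intro c hc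
    rcases List.mem_cons.mp hc with rfl | hcL
    · exact hrem.1
    · exact ih c hcL

lemma red_not_mem {S : Finset ℕ} {m : MatchingOn S} {R : Finset (Sym2 ℕ)} {L : List (Sym2 ℕ)}
    (h : IsReduction m R L) : ∀ c ∈ L, c ∉ R := by
  induction h with
  | nil => simp
  | cons R d L hrem hred ih =>
    intro c hc
    rcases List.mem_cons.mp hc with rfl | hcL
    · exact hrem.2.1
    · exact fun hcR => ih c hcL (Finset.mem_insert_of_mem hcR)

lemma between_mem {S : Finset ℕ} {m : MatchingOn S} {R : Finset (Sym2 ℕ)} {L : List (Sym2 ℕ)}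
    (h : IsReduction m R L) : ∀ c ∈ L, ∀ x, x ∈ S → x ∉ endpointSet R →
    (∃ a b, c = s(a, b) ∧ a < x ∧ x < b) → ∃ c' ∈ L, c' ≠ c ∧ x ∈ c' := by
  induction h with
  | nil => simp
  | cons R d L hrem hred ih =>
    intro c hc x hxS hxR hbet
    rcases List.mem_cons.mp hc with rfl | hcL
    · exact absurd ⟨x, ⟨hxS, hxR⟩, hbet⟩ hrem.2.2
    · have hdc : d ≠ c := fun he => red_not_mem hred c hcL (he ▸ Finset.mem_insert_self d R)
      by_cases hx : x ∈ endpointSet (insert d R)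
      · obtain ⟨e, he, hxe⟩ := hx
        rcases Finset.mem_insert.mp he with rfl | heR
        · exact ⟨e, List.mem_cons_self, hdc, hxe⟩
        · exact absurd ⟨e, heR, hxe⟩ hxR
      · obtain ⟨c', hc', hne, hxc'⟩ := ih c hcL x hxS hx hbet
        exact ⟨c', List.mem_cons_of_mem d hc', hne, hxc'⟩

lemma cross_false {S : Finset ℕ} {m : MatchingOn S} {R : Finset (Sym2 ℕ)} {L : List (Sym2 ℕ)}
    (h : IsReduction m R L) : ∀ c c', c ∈ L → c' ∈ L → c ≠ c' →
    ∀ x y, x ∈ S → y ∈ S → x ∉ endpointSet R → y ∉ endpointSet R →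
    x ∈ c' → y ∈ c →
    (∃ a b, c = s(a, b) ∧ a < x ∧ x < b) →
    (∃ a b, c' = s(a, b) ∧ a < y ∧ y < b) → False := by
  induction h with
  | nil => simp
  | cons R d L hrem hred ih =>
    intro c c' hc hc' hne x y hxS hyS hxR hyR hxc' hyc hbc hbc'
    rcases List.mem_cons.mp hc with rfl | hcL
    · exact hrem.2.2 ⟨x, ⟨hxS, hxR⟩, hbc⟩
    rcases List.mem_cons.mp hc' with rfl | hc'L
    · exact hrem.2.2 ⟨y, ⟨hyS, hyR⟩, hbc'⟩
    have hdc : d ≠ c := fun he => red_not_mem hred c hcL (he ▸ Finset.mem_insert_self d R)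
    have hdc' : d ≠ c' := fun he => red_not_mem hred c' hc'L (he ▸ Finset.mem_insert_self d R)
    have hx' : x ∉ endpointSet (insert d R) := by
      rintro ⟨e, he, hxe⟩
      rcases Finset.mem_insert.mp he with rfl | heR
      · exact m.disj e hrem.1 c' (red_mem_chords hred c' hc'L) hdc' x hxe hxc'
      · exact hxR ⟨e, heR, hxe⟩
    have hy' : y ∉ endpointSet (insert d R) := by
      rintro ⟨e, he, hye⟩
      rcases Finset.mem_insert.mp he with rfl | heR
      · exact m.disj e hrem.1 c (red_mem_chords hred c hcL) hdc y hye hyc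
      · exact hyR ⟨e, heR, hye⟩
    exact ih c c' hcL hc'L hne x y hxS hyS hx' hy' hxc' hyc hbc hbc'

/-- `Des(T(m)) = Short(m)`: for a matching `m` on `[N]` with maximal reduction
process `L`, letting the second row of `T(m)` consist of the larger endpoints of
the removed (unstable) chords, an index `i ∈ [N-1]` is a short chord of `m` iff `i`
lies in the first row and `i+1` in the second row of `T(m)`. -/
theorem stmt13 (N : ℕ) (m : MatchingOn (Finset.Icc 1 N)) (L : List (Sym2 ℕ))
    (hL : IsMaximalReduction m L) (i : ℕ) (hi : 1 ≤ i) (hiN : i + 1 ≤ N) :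
    s(i, i + 1) ∈ m.chords ↔
      (¬ ∃ a, a < i ∧ s(a, i) ∈ L.toFinset) ∧
        ∃ a, a < i + 1 ∧ s(a, i + 1) ∈ L.toFinset := by
  have hempty : (endpointSet (∅ : Finset (Sym2 ℕ))) = ∅ := by
    ext x; simp [endpointSet]
  have hiS : i ∈ Finset.Icc 1 N := by simp; omega
  have hi1S : i + 1 ∈ Finset.Icc 1 N := by simp; omega
  constructor
  · intro h
    constructor
    · rintro ⟨a, ha, haL⟩
      have hmem : s(a, i) ∈ m.chords := red_mem_chords hL.1 _ (List.mem_toFinset.mp haL)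
      have hne : s(a, i) ≠ s(i, i + 1) := by
        intro he; rw [Sym2.eq_iff] at he; omega
      exact m.disj _ hmem _ h hne i (by simp) (by simp)
    · refine ⟨i, by omega, ?_⟩
      by_contra hnot
      refine hL.2 s(i, i + 1) ⟨h, hnot, ?_⟩
      rintro ⟨x, hx, a, b, heq, hax, hxb⟩
      rw [Sym2.eq_iff] at heq
      omega
  · rintro ⟨h1, a, ha, haL⟩
    have haL' := List.mem_toFinset.mp haL
    have hcm : s(a, i + 1) ∈ m.chords := red_mem_chords hL.1 _ haL'
    rcases eq_or_lt_of_le (Nat.lt_succ_iff.mp ha) with rfl | hai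
    · exact hcm
    -- a < i : i is strictly between a and i+1
    obtain ⟨c', hc', hne, hic'⟩ := between_mem hL.1 _ haL' i hiS
      (by rw [hempty]; simp) ⟨a, i + 1, rfl, hai, by omega⟩
    obtain ⟨b, hb⟩ := Sym2.mem_iff_exists.mp hic'
    have hc'm : c' ∈ m.chords := red_mem_chords hL.1 _ hc'
    have hbi : b ≠ i := by
      rintro rfl; exact m.not_diag _ hc'm (by rw [hb]; exact Sym2.mk_isDiag_iff.mpr rfl)
    rcases lt_or_gt_of_ne hbi with hblt | hbgt
    · refine absurd ⟨b, hblt, ?_⟩ h1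
      have hbswap : s(b, i) = c' := by rw [hb, Sym2.eq_swap]
      rw [hbswap]; exact List.mem_toFinset.mpr hc'
    rcases eq_or_lt_of_le (Nat.succ_le_of_lt hbgt) with hbe | hbgt1
    · have : s(i, i + 1) = c' := by rw [hb, ← hbe]
      rw [this]; exact hc'm
    · -- b > i + 1 : crossing contradiction
      exact absurd (cross_false hL.1 s(a, i + 1) c' haL' hc' hne.symm
        i (i + 1) hiS hi1S (by rw [hempty]; simp) (by rw [hempty]; simp)
        hic' (by simp) ⟨a, i + 1, rfl, hai, by omega⟩ ⟨i, b, hb, by omega, hbgt1⟩) (fun f => f)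
end

section
/- For every N and f, the map m ↦ (core(m), T(m)) is a bijection from the set of matchings on [N] with f unmatched vertices to the union over k of (short-chord-free matchings on [N-2k] with f unmatched vertices) × (standard Young tableaux of shape (N-k,k)). -/
open Finset


/-- The set of stable vertices of a matching on `[N]` whose reduction process removed
the chords of `L`. -/
def stableSet (N : ℕ) (L : List (Sym2 ℕ)) : Set ℕ :=
  (Finset.Icc 1 N : Set ℕ) \ endpointSet L.toFinset

/-- `m0` (a matching on `[M]`) is the core of the matching `m` on `[N]` via the
reduction process `L`: the order-preserving re-indexing of the stable vertices of
`m` by `{1, …, M}` carries the stable chords of `m` exactly to the chords of `m0`. -/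
def IsCoreVia {N M : ℕ} (m : MatchingOn (Finset.Icc 1 N)) (L : List (Sym2 ℕ))
    (m0 : MatchingOn (Finset.Icc 1 M)) : Prop :=
  ∃ φ : ℕ → ℕ, Set.BijOn φ (stableSet N L) ↑(Finset.Icc 1 M) ∧
    (∀ x ∈ stableSet N L, ∀ y ∈ stableSet N L, x < y → φ x < φ y) ∧
    ∀ a b, a ∈ stableSet N L → b ∈ stableSet N L →
      (s(a, b) ∈ m.chords ↔ s(φ a, φ b) ∈ m0.chords)

/-- A matching on `[M]` is short-chord-free if it has no chord `(i, i+1)`. -/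
def ShortChordFree {M : ℕ} (m0 : MatchingOn (Finset.Icc 1 M)) : Prop :=
  ∀ i, s(i, i + 1) ∉ m0.chords

/-! ### Sym2 helpers -/

noncomputable def chordLo (c : Sym2 ℕ) : ℕ := Sym2.lift ⟨min, min_comm⟩ c
noncomputable def chordHi (c : Sym2 ℕ) : ℕ := Sym2.lift ⟨max, max_comm⟩ c

@[simp] lemma chordLo_mk (a b : ℕ) : chordLo s(a,b) = min a b := rfl
@[simp] lemma chordHi_mk (a b : ℕ) : chordHi s(a,b) = max a b := rfl

lemma chord_eq (c : Sym2 ℕ) : c = s(chordLo c, chordHi c) := by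
  induction c using Sym2.ind with
  | _ a b =>
    rcases le_total a b with h | h
    · simp only [chordLo_mk, chordHi_mk, min_eq_left h, max_eq_right h]
    · simp only [chordLo_mk, chordHi_mk, min_eq_right h, max_eq_left h]
      exact Sym2.eq_swap

lemma mem_chord_iff {x : ℕ} {c : Sym2 ℕ} : x ∈ c ↔ x = chordLo c ∨ x = chordHi c := by
  conv_lhs => rw [chord_eq c]
  exact Sym2.mem_iff

lemma chordLo_mem (c : Sym2 ℕ) : chordLo c ∈ c := mem_chord_iff.2 (Or.inl rfl)
lemma chordHi_mem (c : Sym2 ℕ) : chordHi c ∈ c := mem_chord_iff.2 (Or.inr rfl)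

lemma chordLo_le_hi (c : Sym2 ℕ) : chordLo c ≤ chordHi c := by
  induction c using Sym2.ind with
  | _ a b => exact min_le_max

lemma chordLo_lt_hi {c : Sym2 ℕ} (h : ¬ c.IsDiag) : chordLo c < chordHi c := by
  rcases lt_or_eq_of_le (chordLo_le_hi c) with h' | h'
  · exact h'
  · exfalso; apply h; rw [chord_eq c, h']; exact Sym2.mk_isDiag_iff.2 rfl

lemma chord_eq_of_lo_hi {c c' : Sym2 ℕ} (h1 : chordLo c = chordLo c') (h2 : chordHi c = chordHi c') :
    c = c' := by rw [chord_eq c, chord_eq c', h1, h2]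

lemma mk_mem_chords_lo_hi {a b : ℕ} (hab : a < b) :
    chordLo s(a,b) = a ∧ chordHi s(a,b) = b := by
  constructor
  · simp [min_eq_left hab.le]
  · simp [max_eq_right hab.le]

/-- endpoints as a Finset -/
noncomputable def epF (U : Finset (Sym2 ℕ)) : Finset ℕ :=
  U.biUnion fun c => {chordLo c, chordHi c}

lemma mem_epF {x : ℕ} {U : Finset (Sym2 ℕ)} : x ∈ epF U ↔ ∃ c ∈ U, x ∈ c := by
  simp only [epF, mem_biUnion, mem_insert, mem_singleton]
  constructor
  · rintro ⟨c, hc, h⟩; exact ⟨c, hc, mem_chord_iff.2 h⟩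
  · rintro ⟨c, hc, h⟩; exact ⟨c, hc, mem_chord_iff.1 h⟩

lemma coe_epF (U : Finset (Sym2 ℕ)) : (epF U : Set ℕ) = endpointSet U := by
  ext x; simp only [Finset.mem_coe, mem_epF]; rfl

lemma btwnFree_iff {T : Set ℕ} {c : Sym2 ℕ} :
    btwnFree T c ↔ ∀ x ∈ T, ¬(chordLo c < x ∧ x < chordHi c) := by
  constructor
  · intro h x hx hxc
    exact h ⟨x, hx, chordLo c, chordHi c, chord_eq c, hxc.1, hxc.2⟩
  · rintro h ⟨x, hx, a, b, hc, h1, h2⟩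
    refine h x hx ?_
    have := hc ▸ chord_eq c
    rcases (Sym2.mk_eq_mk_iff (p := (chordLo c, chordHi c)) (q := (a, b))).1 ((chord_eq c).symm.trans hc) with h' | h'
    · obtain ⟨ha, hb⟩ := Prod.mk.injEq .. ▸ h'
      simp only [Prod.mk.injEq] at h'
      exact ⟨h'.1 ▸ h1, h'.2 ▸ h2⟩
    · simp only [Prod.swap_prod_mk, Prod.mk.injEq] at h'
      constructor
      · calc chordLo c ≤ chordHi c := chordLo_le_hi c
          _ = a := h'.2
          _ < x := h1
      · calc x < b := h2
          _ = chordLo c := h'.1.symm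
          _ ≤ chordHi c := chordLo_le_hi c


/-! ### Reduction basics -/

lemma endpointSet_mono {R R' : Finset (Sym2 ℕ)} (h : R ⊆ R') : endpointSet R ⊆ endpointSet R' := by
  rintro x ⟨c, hc, hx⟩; exact ⟨c, h hc, hx⟩

section Red
variable {S : Finset ℕ} {m : MatchingOn S}

lemma removable_mono_s14 {R R' : Finset (Sym2 ℕ)} {c : Sym2 ℕ}
    (h : removable m R c) (hsub : R ⊆ R') (hc : c ∉ R') : removable m R' c := by
  refine ⟨h.1, hc, ?_⟩
  have h3 := h.2.2
  rw [btwnFree_iff] at h3 ⊢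
  intro x hx
  exact h3 x ⟨hx.1, fun hmem => hx.2 (endpointSet_mono hsub hmem)⟩

lemma isReduction_not_mem {R : Finset (Sym2 ℕ)} {L : List (Sym2 ℕ)}
    (h : IsReduction m R L) : ∀ c ∈ L, c ∉ R := by
  induction h with
  | nil => simp
  | cons R c L hrem _ ih =>
    intro d hd
    rcases List.mem_cons.1 hd with rfl | hd
    · exact hrem.2.1
    · exact fun hdR => ih d hd (Finset.mem_insert_of_mem hdR)

lemma isReduction_nodup {R : Finset (Sym2 ℕ)} {L : List (Sym2 ℕ)}
    (h : IsReduction m R L) : L.Nodup := by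
  induction h with
  | nil => simp
  | cons R c L hrem hred ih =>
    refine List.nodup_cons.2 ⟨fun hc => ?_, ih⟩
    exact isReduction_not_mem hred c hc (Finset.mem_insert_self c R)

lemma isReduction_mem_chords {R : Finset (Sym2 ℕ)} {L : List (Sym2 ℕ)}
    (h : IsReduction m R L) : ∀ c ∈ L, c ∈ m.chords := by
  induction h with
  | nil => simp
  | cons R c L hrem _ ih =>
    intro d hd
    rcases List.mem_cons.1 hd with rfl | hd
    · exact hrem.1
    · exact ih d hd

lemma isReduction_decomp {R : Finset (Sym2 ℕ)} {p q : List (Sym2 ℕ)} {c : Sym2 ℕ}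
    (h : IsReduction m R (p ++ c :: q)) : removable m (R ∪ p.toFinset) c := by
  induction p generalizing R with
  | nil =>
    simp only [List.nil_append] at h
    cases h with
    | cons _ _ _ hrem _ => simpa using hrem
  | cons a p ih =>
    simp only [List.cons_append] at h
    cases h with
    | cons _ _ _ hrem hred =>
      have := ih hred
      have hset : insert a R ∪ p.toFinset = R ∪ (a :: p).toFinset := by
        ext x; simp only [List.toFinset_cons, Finset.mem_union, Finset.mem_insert]; tauto
      rwa [hset] at this

lemma isReduction_subset_of_maximal {U : Finset (Sym2 ℕ)} {L' : List (Sym2 ℕ)} {R : Finset (Sym2 ℕ)}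
    (h : IsReduction m R L') (hRU : R ⊆ U) (hmax : ∀ c, ¬ removable m U c) :
    L'.toFinset ⊆ U := by
  induction h with
  | nil => simp
  | cons R c L hrem hred ih =>
    have hcU : c ∈ U := by
      by_contra hc
      exact hmax c (removable_mono_s14 hrem hRU hc)
    intro d hd
    simp only [List.toFinset_cons, Finset.mem_insert] at hd
    rcases hd with rfl | hd
    · exact hcU
    · exact ih (Finset.insert_subset hcU hRU) hd

lemma maximal_toFinset_eq {L L' : List (Sym2 ℕ)}
    (h : IsMaximalReduction m L) (h' : IsMaximalReduction m L') : L.toFinset = L'.toFinset := by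
  apply Finset.Subset.antisymm
  · exact isReduction_subset_of_maximal h.1 (Finset.empty_subset _) h'.2
  · exact isReduction_subset_of_maximal h'.1 (Finset.empty_subset _) h.2

lemma exists_maximal_aux (n : ℕ) : ∀ R : Finset (Sym2 ℕ), (m.chords \ R).card ≤ n →
    ∃ L, IsReduction m R L ∧ ∀ c, ¬ removable m (R ∪ L.toFinset) c := by
  induction n with
  | zero =>
    intro R hR
    refine ⟨[], IsReduction.nil R, fun c hc => ?_⟩
    have : c ∈ m.chords \ R := Finset.mem_sdiff.2 ⟨hc.1, by simpa using hc.2.1⟩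
    have := Finset.card_pos.2 ⟨c, this⟩
    omega
  | succ n ih =>
    intro R hR
    by_cases h : ∃ c, removable m R c
    · obtain ⟨c, hc⟩ := h
      have hmem : c ∈ m.chords \ R := Finset.mem_sdiff.2 ⟨hc.1, hc.2.1⟩
      have hcard : (m.chords \ insert c R).card ≤ n := by
        have : m.chords \ insert c R = (m.chords \ R).erase c := by
          ext x; simp [Finset.mem_sdiff, Finset.mem_erase]; tauto
        rw [this, Finset.card_erase_of_mem hmem]
        omega
      obtain ⟨L, hL, hLmax⟩ := ih (insert c R) hcard
      refine ⟨c :: L, IsReduction.cons R c L hc hL, fun d hd => ?_⟩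
      apply hLmax d
      have : insert c R ∪ L.toFinset = R ∪ (c :: L).toFinset := by
        ext x; simp only [List.toFinset_cons, Finset.mem_union, Finset.mem_insert]; tauto
      rwa [this]
    · exact ⟨[], IsReduction.nil R, fun c hc =>
        h ⟨c, (by simpa using hc : removable m R c)⟩⟩

lemma exists_maximal (m : MatchingOn S) : ∃ L, IsMaximalReduction m L := by
  obtain ⟨L, hL, hmax⟩ := exists_maximal_aux (m := m) (m.chords \ ∅).card ∅ le_rfl
  exact ⟨L, hL, by simpa using hmax⟩

end Red


/-! ### Nested families -/

def Fam (U : Finset (Sym2 ℕ)) : Prop :=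
  (∀ c ∈ U, ¬ c.IsDiag) ∧
  (∀ c ∈ U, ∀ c' ∈ U, c ≠ c' → ∀ x ∈ c, x ∉ c') ∧
  (∀ c ∈ U, ∀ t, chordLo c < t → t < chordHi c →
     ∃ c' ∈ U, t ∈ c' ∧ chordLo c < chordLo c' ∧ chordHi c' < chordHi c)

lemma fam_hi_inj {U : Finset (Sym2 ℕ)} (hF : Fam U) {c c' : Sym2 ℕ}
    (hc : c ∈ U) (hc' : c' ∈ U) (h : chordHi c = chordHi c') : c = c' := by
  by_contra hne
  exact hF.2.1 c hc c' hc' hne (chordHi c) (chordHi_mem c) (h ▸ chordHi_mem c')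

lemma fam_of_reduction {N : ℕ} {m : MatchingOn (Finset.Icc 1 N)} {L : List (Sym2 ℕ)}
    (h : IsReduction m ∅ L) : Fam L.toFinset := by
  have hmem : ∀ c ∈ L.toFinset, c ∈ m.chords := fun c hc =>
    isReduction_mem_chords h c (List.mem_toFinset.1 hc)
  refine ⟨fun c hc => m.not_diag c (hmem c hc), ?_, ?_⟩
  · intro c hc c' hc' hne x hx
    exact m.disj c (hmem c hc) c' (hmem c' hc') hne x hx
  · intro c hc t ht1 ht2
    have hcL : c ∈ L := List.mem_toFinset.1 hc
    obtain ⟨p, q, rfl⟩ := List.append_of_mem hcL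
    have hnd : (p ++ c :: q).Nodup := isReduction_nodup h
    have hcp : c ∉ p := by
      intro hcp
      exact (List.disjoint_of_nodup_append hnd) hcp ((List.mem_cons_self (a := c) (l := q)))
    have hrem := isReduction_decomp h
    rw [Finset.empty_union] at hrem
    have hcc : c ∈ m.chords := hrem.1
    have hloS : chordLo c ∈ Finset.Icc 1 N := m.mem_support c hcc _ (chordLo_mem c)
    have hhiS : chordHi c ∈ Finset.Icc 1 N := m.mem_support c hcc _ (chordHi_mem c)
    have htS : t ∈ Finset.Icc 1 N := by
      simp only [Finset.mem_Icc] at hloS hhiS ⊢; omega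
    have hbf := hrem.2.2
    rw [btwnFree_iff] at hbf
    have htp : t ∈ endpointSet p.toFinset := by
      by_contra hns
      exact hbf t ⟨by exact_mod_cast htS, hns⟩ ⟨ht1, ht2⟩
    obtain ⟨c', hc'p, htc'⟩ := htp
    have hc'list : c' ∈ p := List.mem_toFinset.1 hc'p
    obtain ⟨p1, p2, hp⟩ := List.append_of_mem hc'list
    have hL' : p ++ c :: q = p1 ++ c' :: (p2 ++ c :: q) := by
      rw [hp]; simp
    have hrem' : removable m (∅ ∪ p1.toFinset) c' := by
      rw [hL'] at h; exact isReduction_decomp h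
    rw [Finset.empty_union] at hrem'
    have hc'c : c' ∈ m.chords := hrem'.1
    have hne : c ≠ c' := fun he => hcp (he ▸ hc'list)
    -- endpoints of c are distinct from endpoints of c'
    have hdisj := m.disj c hcc c' hc'c hne
    -- endpoints of c are not endpoints of chords in p1
    have hsurv : ∀ x ∈ c, x ∉ endpointSet p1.toFinset := by
      intro x hx ⟨d, hd, hxd⟩
      have hdp : d ∈ p := by rw [hp]; exact List.mem_append_left _ (List.mem_toFinset.1 hd)
      have hdc : d ≠ c := fun he => hcp (he ▸ hdp)
      have hdm : d ∈ m.chords := isReduction_mem_chords h d (by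
        rw [hL']
        exact List.mem_append_left _ (List.mem_toFinset.1 hd))
      exact m.disj c hcc d hdm (Ne.symm hdc) x hx hxd
    have hbf' := hrem'.2.2
    rw [btwnFree_iff] at hbf'
    have hnb1 : ¬ (chordLo c' < chordLo c ∧ chordLo c < chordHi c') :=
      hbf' (chordLo c) ⟨by exact_mod_cast hloS, hsurv _ (chordLo_mem c)⟩
    have hnb2 : ¬ (chordLo c' < chordHi c ∧ chordHi c < chordHi c') :=
      hbf' (chordHi c) ⟨by exact_mod_cast hhiS, hsurv _ (chordHi_mem c)⟩
    have hll : chordLo c ≠ chordLo c' := fun he => hdisj _ (chordLo_mem c) (he ▸ chordLo_mem c')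
    have hlh : chordLo c ≠ chordHi c' := fun he => hdisj _ (chordLo_mem c) (he ▸ chordHi_mem c')
    have hhl : chordHi c ≠ chordLo c' := fun he => hdisj _ (chordHi_mem c) (he ▸ chordLo_mem c')
    have hhh : chordHi c ≠ chordHi c' := fun he => hdisj _ (chordHi_mem c) (he ▸ chordHi_mem c')
    have hc'nd : chordLo c' < chordHi c' := chordLo_lt_hi (m.not_diag c' hc'c)
    have htcases : t = chordLo c' ∨ t = chordHi c' := mem_chord_iff.1 htc'
    refine ⟨c', List.mem_toFinset.2 (List.mem_append_left _ hc'list), htc', ?_, ?_⟩ <;> omega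
  
lemma fam_unique_aux {U1 U2 : Finset (Sym2 ℕ)} (hF1 : Fam U1) (hF2 : Fam U2)
    (him : U1.image chordHi = U2.image chordHi) :
    ∀ b : ℕ, ∀ c1 ∈ U1, ∀ c2 ∈ U2, chordHi c1 = b → chordHi c2 = b → c1 = c2 := by
  intro b
  induction b using Nat.strong_induction_on with
  | _ b ih =>
    intro c1 hc1 c2 hc2 hb1 hb2
    rcases lt_trichotomy (chordLo c1) (chordLo c2) with hlt | heq | hgt
    · exfalso
      have hnd2 : chordLo c2 < chordHi c2 := chordLo_lt_hi (hF2.1 c2 hc2)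
      obtain ⟨c', hc', htc', hlo', hhi'⟩ := hF1.2.2 c1 hc1 (chordLo c2) hlt (by omega)
      have : chordHi c' ∈ U2.image chordHi := him ▸ Finset.mem_image_of_mem chordHi hc'
      obtain ⟨c'', hc'', hhi''⟩ := Finset.mem_image.1 this
      have hceq : c' = c'' := ih (chordHi c') (by omega) c' hc' c'' hc'' rfl hhi''
      subst hceq
      have hne : c' ≠ c2 := fun he => by rw [he] at hhi'; omega
      exact hF2.2.1 c' hc'' c2 hc2 hne (chordLo c2) htc' (chordLo_mem c2)
    · exact chord_eq_of_lo_hi heq (by omega)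
    · exfalso
      have hnd1 : chordLo c1 < chordHi c1 := chordLo_lt_hi (hF1.1 c1 hc1)
      obtain ⟨c', hc', htc', hlo', hhi'⟩ := hF2.2.2 c2 hc2 (chordLo c1) hgt (by omega)
      have : chordHi c' ∈ U1.image chordHi := him ▸ Finset.mem_image_of_mem chordHi hc'
      obtain ⟨c'', hc'', hhi''⟩ := Finset.mem_image.1 this
      have hceq : c'' = c' := ih (chordHi c') (by omega) c'' hc'' c' hc' hhi'' rfl
      subst hceq
      have hne : c'' ≠ c1 := fun he => by rw [he] at hhi'; omega
      exact hF1.2.1 c'' hc'' c1 hc1 hne (chordLo c1) htc' (chordLo_mem c1)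

lemma fam_unique {U1 U2 : Finset (Sym2 ℕ)} (hF1 : Fam U1) (hF2 : Fam U2)
    (him : U1.image chordHi = U2.image chordHi) : U1 = U2 := by
  ext c
  constructor
  · intro hc
    have : chordHi c ∈ U2.image chordHi := him ▸ Finset.mem_image_of_mem chordHi hc
    obtain ⟨c2, hc2, hh⟩ := Finset.mem_image.1 this
    rwa [fam_unique_aux hF1 hF2 him (chordHi c) c hc c2 hc2 rfl hh]
  · intro hc
    have : chordHi c ∈ U1.image chordHi := him.symm ▸ Finset.mem_image_of_mem chordHi hc
    obtain ⟨c1, hc1, hh⟩ := Finset.mem_image.1 this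
    rwa [← fam_unique_aux hF1 hF2 him (chordHi c) c1 hc1 c hc hh rfl]


/-! ### Greedy pairing -/

lemma length_filter_toList (s : Finset ℕ) (p : ℕ → Prop) [DecidablePred p] :
    (s.toList.filter (fun x => decide (p x))).length = (s.filter p).card := by
  rw [← List.countP_eq_length_filter]
  have : (s.filter p).card = Multiset.countP (fun x => decide (p x)) s.val := by
    simp [Finset.filter, Finset.card, Multiset.countP_eq_card_filter]
  rw [this, ← Finset.coe_toList s, Multiset.coe_countP]
  simp

noncomputable def pairList : List ℕ → Finset ℕ → List (ℕ × ℕ)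
  | [], _ => []
  | b :: bs, A =>
    (WithBot.unbotD 0 (A.filter (· < b)).max, b) ::
      pairList bs (A.erase (WithBot.unbotD 0 (A.filter (· < b)).max))

lemma max_unbot'_mem {F : Finset ℕ} (h : F.Nonempty) : WithBot.unbotD 0 F.max ∈ F := by
  rw [← Finset.coe_max' h, WithBot.unbotD_coe]
  exact F.max'_mem h

lemma le_max_unbot' {F : Finset ℕ} (h : F.Nonempty) {x : ℕ} (hx : x ∈ F) :
    x ≤ WithBot.unbotD 0 F.max := by
  rw [← Finset.coe_max' h, WithBot.unbotD_coe]
  exact F.le_max' x hx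

lemma pairList_spec (bs : List ℕ) : ∀ (A : Finset ℕ),
    bs.Pairwise (· < ·) →
    (∀ b ∈ bs, b ∉ A) →
    (∀ b ∈ bs, (bs.filter (· ≤ b)).length ≤ (A.filter (· < b)).card) →
    ((pairList bs A).map Prod.snd = bs) ∧
    (∀ p ∈ pairList bs A, p.1 ∈ A ∧ p.1 < p.2) ∧
    (List.Pairwise (fun p q : ℕ × ℕ => p.1 ≠ q.1 ∧ p.1 ≠ q.2 ∧ p.2 ≠ q.1) (pairList bs A)) ∧
    (∀ p ∈ pairList bs A, ∀ t, p.1 < t → t < p.2 → (t ∈ A ∨ t ∈ bs) →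
       ∃ q ∈ pairList bs A, (t = q.1 ∨ t = q.2) ∧ p.1 < q.1 ∧ q.2 < p.2) := by
  induction bs with
  | nil => intro A _ _ _; simp [pairList]
  | cons b bs ih =>
    intro A hsort hA hcard
    obtain ⟨hblt, hsort'⟩ := List.pairwise_cons.1 hsort
    set a := (WithBot.unbotD 0 (A.filter (· < b)).max) with ha_def
    have hFne : (A.filter (· < b)).Nonempty := by
      apply Finset.card_pos.1
      have h1 := hcard b ((List.mem_cons_self (a := b) (l := bs)))
      have h2 : 0 < ((b :: bs).filter (· ≤ b)).length := by
        apply List.length_pos_iff.2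
        intro he
        have : b ∈ (b :: bs).filter (· ≤ b) := by
          apply List.mem_filter.2
          exact ⟨(List.mem_cons_self (a := b) (l := bs)), by simp⟩
        rw [he] at this; exact List.not_mem_nil this
      omega
    have haF : a ∈ A.filter (· < b) := max_unbot'_mem hFne
    have haA : a ∈ A := (Finset.mem_filter.1 haF).1
    have hab : a < b := by
      have := (Finset.mem_filter.1 haF).2; simpa using this
    have hamax : ∀ x ∈ A, x < b → x ≤ a := fun x hx hxb =>
      le_max_unbot' hFne (Finset.mem_filter.2 ⟨hx, by simpa using hxb⟩)
    have hA' : ∀ b' ∈ bs, b' ∉ A.erase a := fun b' h hmem =>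
      hA b' (List.mem_cons_of_mem b h) (Finset.mem_of_mem_erase hmem)
    have hcard' : ∀ b' ∈ bs, (bs.filter (· ≤ b')).length ≤ ((A.erase a).filter (· < b')).card := by
      intro b' hb'
      have hbb' : b < b' := hblt b' hb'
      have e1 : (b :: bs).filter (· ≤ b') = b :: bs.filter (· ≤ b') :=
        List.filter_cons_of_pos (by simp; omega)
      have h1 := hcard b' (List.mem_cons_of_mem b hb')
      rw [e1] at h1
      simp only [List.length_cons] at h1
      have e2 : (A.erase a).filter (· < b') = (A.filter (· < b')).erase a :=
        Finset.filter_erase _ a A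
      rw [e2, Finset.card_erase_of_mem (Finset.mem_filter.2 ⟨haA, by omega⟩)]
      omega
    obtain ⟨ih1, ih2, ih3, ih4⟩ := ih (A.erase a) hsort' hA' hcard'
    have hsnd : ∀ q ∈ pairList bs (A.erase a), q.2 ∈ bs := by
      intro q hq
      rw [← ih1]
      exact List.mem_map_of_mem (f := Prod.snd) hq
    have hplcons : pairList (b :: bs) A = (a, b) :: pairList bs (A.erase a) := by
      simp [pairList, ha_def]
    rw [hplcons]
    refine ⟨?_, ?_, ?_, ?_⟩
    · simp [ih1]
    · intro p hp
      rcases List.mem_cons.1 hp with rfl | hp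
      · exact ⟨haA, hab⟩
      · exact ⟨Finset.mem_of_mem_erase (ih2 p hp).1, (ih2 p hp).2⟩
    · refine List.pairwise_cons.2 ⟨?_, ih3⟩
      intro q hq
      refine ⟨?_, ?_, ?_⟩
      · exact fun he => (Finset.ne_of_mem_erase ((ih2 q hq).1)) he.symm
      · have := hblt q.2 (hsnd q hq); intro he; omega
      · intro he
        apply hA b ((List.mem_cons_self (a := b) (l := bs)))
        have hm := Finset.mem_of_mem_erase (ih2 q hq).1
        simp only at he
        rwa [← he] at hm
    · intro p hp t ht1 ht2 htmem
      rcases List.mem_cons.1 hp with rfl | hp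
      · -- head pair: no such t
        exfalso
        rcases htmem with htA | htbs
        · have := hamax t htA (by simpa using ht2)
          simp only at ht1; omega
        · rcases List.mem_cons.1 htbs with rfl | htbs
          · simp only at ht2; omega
          · have := hblt t htbs; simp only at ht2; omega
      · by_cases hta : t = a
        · refine ⟨(a, b), List.mem_cons_self, Or.inl hta, ?_, ?_⟩
          · simp only; omega
          · simpa using hblt p.2 (hsnd p hp)
        · by_cases htb : t = b
          · refine ⟨(a, b), List.mem_cons_self, Or.inr htb, ?_, ?_⟩
            · have hp1 : p.1 ∈ A.erase a := (ih2 p hp).1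
              have h2 := hamax p.1 (Finset.mem_of_mem_erase hp1) (by omega)
              have h3 := Finset.ne_of_mem_erase hp1
              simp only; omega
            · simpa using hblt p.2 (hsnd p hp)
          · have htmem' : t ∈ A.erase a ∨ t ∈ bs := by
              rcases htmem with htA | htbs
              · exact Or.inl (Finset.mem_erase.2 ⟨hta, htA⟩)
              · rcases List.mem_cons.1 htbs with rfl | htbs
                · exact absurd rfl htb
                · exact Or.inr htbs
            obtain ⟨q, hq, hqt, hq1, hq2⟩ := ih4 p hp t ht1 ht2 htmem'
            exact ⟨q, List.mem_cons_of_mem _ hq, hqt, hq1, hq2⟩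


/-! ### The greedy family for a ballot set -/

def Ballot (N : ℕ) (R : Finset ℕ) : Prop :=
  R ⊆ Finset.Icc 1 N ∧ ∀ t, 2 * (R ∩ Finset.Icc 1 t).card ≤ t

noncomputable def thePairs (N : ℕ) (R : Finset ℕ) : List (ℕ × ℕ) :=
  pairList (R.sort (· ≤ ·)) (Finset.Icc 1 N \ R)

noncomputable def famList (N : ℕ) (R : Finset ℕ) : List (Sym2 ℕ) :=
  (thePairs N R).map (fun p => s(p.1, p.2))

noncomputable def famOf (N : ℕ) (R : Finset ℕ) : Finset (Sym2 ℕ) := (famList N R).toFinset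

section BallotFacts
variable {N : ℕ} {R : Finset ℕ} (hB : Ballot N R)
include hB

lemma thePairs_spec :
    ((thePairs N R).map Prod.snd = R.sort (· ≤ ·)) ∧
    (∀ p ∈ thePairs N R, p.1 ∈ Finset.Icc 1 N \ R ∧ p.1 < p.2) ∧
    (List.Pairwise (fun p q : ℕ × ℕ => p.1 ≠ q.1 ∧ p.1 ≠ q.2 ∧ p.2 ≠ q.1) (thePairs N R)) ∧
    (∀ p ∈ thePairs N R, ∀ t, p.1 < t → t < p.2 →
        (t ∈ Finset.Icc 1 N \ R ∨ t ∈ R.sort (· ≤ ·)) →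
       ∃ q ∈ thePairs N R, (t = q.1 ∨ t = q.2) ∧ p.1 < q.1 ∧ q.2 < p.2) := by
  apply pairList_spec
  · exact List.sortedLT_iff_pairwise.1 (Finset.sortedLT_sort R)
  · intro b hb hmem
    rw [Finset.mem_sort] at hb
    exact (Finset.mem_sdiff.1 hmem).2 hb
  · intro b hb
    rw [Finset.mem_sort] at hb
    have hbN : b ∈ Finset.Icc 1 N := hB.1 hb
    rw [Finset.mem_Icc] at hbN
    have e1 : ((R.sort (· ≤ ·)).filter (· ≤ b)).length = (R.filter (· ≤ b)).card := by
      rw [List.Perm.length_eq ((Finset.sort_perm_toList R (· ≤ ·)).filter _)]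
      exact length_filter_toList R (· ≤ b)
    have e2 : R.filter (· ≤ b) = R ∩ Finset.Icc 1 b := by
      ext x
      simp only [Finset.mem_filter, Finset.mem_inter, Finset.mem_Icc]
      constructor
      · intro ⟨hx, hxb⟩
        have := hB.1 hx; rw [Finset.mem_Icc] at this
        exact ⟨hx, this.1, hxb⟩
      · tauto
    have e3 : (Finset.Icc 1 N \ R).filter (· < b) = Finset.Icc 1 (b-1) \ R := by
      ext x
      simp only [Finset.mem_filter, Finset.mem_sdiff, Finset.mem_Icc]
      constructor
      · rintro ⟨⟨⟨h1, h2⟩, h3⟩, h4⟩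
        exact ⟨⟨h1, by omega⟩, h3⟩
      · rintro ⟨⟨h1, h2⟩, h3⟩
        exact ⟨⟨⟨h1, by omega⟩, h3⟩, by omega⟩
    have e4 : (Finset.Icc 1 (b-1) \ R).card = (b-1) - (R ∩ Finset.Icc 1 (b-1)).card := by
      rw [show Finset.Icc 1 (b-1) \ R = Finset.Icc 1 (b-1) \ (R ∩ Finset.Icc 1 (b-1)) by
        ext x; simp only [Finset.mem_sdiff, Finset.mem_inter]; tauto]
      rw [Finset.card_sdiff_of_subset Finset.inter_subset_right, Nat.card_Icc]
      simp
    have e5 : R ∩ Finset.Icc 1 b = insert b (R ∩ Finset.Icc 1 (b-1)) := by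
      ext x
      simp only [Finset.mem_inter, Finset.mem_insert, Finset.mem_Icc]
      constructor
      · intro ⟨hx, h1, h2⟩
        by_cases hxb : x = b
        · exact Or.inl hxb
        · exact Or.inr ⟨hx, h1, by omega⟩
      · rintro (rfl | ⟨hx, h1, h2⟩)
        · exact ⟨hb, by omega⟩
        · exact ⟨hx, h1, by omega⟩
    have e6 : b ∉ R ∩ Finset.Icc 1 (b-1) := by
      simp only [Finset.mem_inter, Finset.mem_Icc]; omega
    have hball := hB.2 b
    rw [e1, e2, e3, e4, e5, Finset.card_insert_of_notMem e6] at *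
    omega

lemma thePairs_snd_mem {p : ℕ × ℕ} (hp : p ∈ thePairs N R) : p.2 ∈ R := by
  have := (thePairs_spec hB).1
  rw [← Finset.mem_sort (α := ℕ) (· ≤ ·), ← this]
  exact List.mem_map_of_mem (f := Prod.snd) hp

lemma famList_lo_hi {p : ℕ × ℕ} (hp : p ∈ thePairs N R) :
    chordLo s(p.1, p.2) = p.1 ∧ chordHi s(p.1, p.2) = p.2 :=
  mk_mem_chords_lo_hi ((thePairs_spec hB).2.1 p hp).2

lemma thePairs_pw :
    List.Pairwise (fun p q : ℕ × ℕ =>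
      p.1 ≠ q.1 ∧ p.1 ≠ q.2 ∧ p.2 ≠ q.1 ∧ p.2 ≠ q.2) (thePairs N R) := by
  have h1 := (thePairs_spec hB).2.2.1
  have h2 : List.Pairwise (fun p q : ℕ × ℕ => p.2 ≠ q.2) (thePairs N R) := by
    rw [← List.pairwise_map (f := Prod.snd)]
    rw [(thePairs_spec hB).1]
    exact (Finset.sort_nodup R (· ≤ ·))
  exact (h1.and h2).imp (fun h => ⟨h.1.1, h.1.2.1, h.1.2.2, h.2⟩)

lemma thePairs_nodup : (thePairs N R).Nodup :=
  List.Pairwise.imp (fun h he => h.1 (congrArg Prod.fst he)) (thePairs_pw hB)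

lemma famList_nodup : (famList N R).Nodup := by
  refine List.Nodup.map_on ?_ (thePairs_nodup hB)
  intro p hp q hq he
  have h1 := ((thePairs_spec hB).2.1 p hp).2
  have h2 := ((thePairs_spec hB).2.1 q hq).2
  rcases (Sym2.mk_eq_mk_iff (p := (_, _)) (q := (_, _))).1 he with h | h <;>
    · simp only [Prod.mk.injEq, Prod.swap_prod_mk] at h
      ext <;> omega

omit hB in
lemma mem_famOf {c : Sym2 ℕ} : c ∈ famOf N R ↔ ∃ p ∈ thePairs N R, s(p.1, p.2) = c := by
  simp only [famOf, famList, List.mem_toFinset, List.mem_map]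

lemma fam_famOf : Fam (famOf N R) := by
  obtain ⟨s1, s2, s3, s4⟩ := thePairs_spec hB
  refine ⟨?_, ?_, ?_⟩
  · intro c hc
    obtain ⟨p, hp, rfl⟩ := (mem_famOf).1 hc
    rw [Sym2.mk_isDiag_iff]
    have := (s2 p hp).2; omega
  · intro c hc c' hc' hne x hx hx'
    obtain ⟨p, hp, rfl⟩ := (mem_famOf).1 hc
    obtain ⟨q, hq, rfl⟩ := (mem_famOf).1 hc'
    have hpq : p ≠ q := fun he => hne (by rw [he])
    have hsym : Symmetric (fun p q : ℕ × ℕ =>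
        p.1 ≠ q.1 ∧ p.1 ≠ q.2 ∧ p.2 ≠ q.1 ∧ p.2 ≠ q.2) := by
      intro p q h; exact ⟨h.1.symm, h.2.2.1.symm, h.2.1.symm, h.2.2.2.symm⟩
    have hrel := haveI : Std.Symm (fun p q : ℕ × ℕ =>
        p.1 ≠ q.1 ∧ p.1 ≠ q.2 ∧ p.2 ≠ q.1 ∧ p.2 ≠ q.2) := ⟨fun a b h => hsym h⟩
      (thePairs_pw hB).forall hp hq hpq
    rw [Sym2.mem_iff] at hx hx'
    rcases hx with rfl | rfl <;> rcases hx' with h | h <;> tauto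
  · intro c hc t ht1 ht2
    obtain ⟨p, hp, rfl⟩ := (mem_famOf).1 hc
    obtain ⟨hlo, hhi⟩ := famList_lo_hi hB hp
    rw [hlo] at ht1; rw [hhi] at ht2
    have htIcc : t ∈ Finset.Icc 1 N := by
      have h1 := (s2 p hp).1
      rw [Finset.mem_sdiff, Finset.mem_Icc] at h1
      have h2 := hB.1 (thePairs_snd_mem hB hp)
      rw [Finset.mem_Icc] at h2
      rw [Finset.mem_Icc]
      omega
    have htm : t ∈ Finset.Icc 1 N \ R ∨ t ∈ R.sort (· ≤ ·) := by
      by_cases htR : t ∈ R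
      · exact Or.inr ((Finset.mem_sort (· ≤ ·)).2 htR)
      · exact Or.inl (Finset.mem_sdiff.2 ⟨htIcc, htR⟩)
    obtain ⟨q, hq, hqt, hq1, hq2⟩ := s4 p hp t ht1 ht2 htm
    obtain ⟨hlo', hhi'⟩ := famList_lo_hi hB hq
    refine ⟨s(q.1, q.2), (mem_famOf).2 ⟨q, hq, rfl⟩, ?_, ?_, ?_⟩
    · rw [Sym2.mem_iff]; tauto
    · rw [hlo, hlo']; exact hq1
    · rw [hhi, hhi']; exact hq2

lemma famOf_image_hi : (famOf N R).image chordHi = R := by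
  ext b
  simp only [Finset.mem_image]
  constructor
  · rintro ⟨c, hc, rfl⟩
    obtain ⟨p, hp, rfl⟩ := (mem_famOf).1 hc
    rw [(famList_lo_hi hB hp).2]
    exact thePairs_snd_mem hB hp
  · intro hb
    have : b ∈ (thePairs N R).map Prod.snd := by
      rw [(thePairs_spec hB).1, Finset.mem_sort]; exact hb
    obtain ⟨p, hp, rfl⟩ := List.mem_map.1 this
    exact ⟨s(p.1, p.2), (mem_famOf).2 ⟨p, hp, rfl⟩, (famList_lo_hi hB hp).2⟩

lemma famOf_card : (famOf N R).card = R.card := by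
  rw [famOf, List.card_toFinset, (famList_nodup hB).dedup]
  rw [famList, List.length_map]
  have := congrArg List.length ((thePairs_spec hB).1)
  rw [List.length_map, Finset.length_sort] at this
  exact this

lemma famOf_support {c : Sym2 ℕ} (hc : c ∈ famOf N R) : ∀ x ∈ c, x ∈ Finset.Icc 1 N := by
  obtain ⟨p, hp, rfl⟩ := (mem_famOf).1 hc
  intro x hx
  rw [Sym2.mem_iff] at hx
  have h1 := ((thePairs_spec hB).2.1 p hp).1
  rw [Finset.mem_sdiff] at h1
  have h2 := hB.1 (thePairs_snd_mem hB hp)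
  rcases hx with rfl | rfl
  · exact h1.1
  · exact h2

lemma famOf_lo_not_mem {c : Sym2 ℕ} (hc : c ∈ famOf N R) : chordLo c ∉ R := by
  obtain ⟨p, hp, rfl⟩ := (mem_famOf).1 hc
  rw [(famList_lo_hi hB hp).1]
  have h1 := ((thePairs_spec hB).2.1 p hp).1
  rw [Finset.mem_sdiff] at h1
  exact h1.2

end BallotFacts

lemma fam_epF_card {U : Finset (Sym2 ℕ)} (hF : Fam U) : (epF U).card = 2 * U.card := by
  rw [epF, Finset.card_biUnion]
  · rw [Finset.sum_congr rfl (fun c hc => ?_), Finset.sum_const, smul_eq_mul, mul_comm]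
    rw [Finset.card_insert_of_notMem (by
      simp only [Finset.mem_singleton]
      exact fun he => absurd (chordLo_lt_hi (hF.1 c hc)) (by omega))]
    simp
  · intro c hc c' hc' hne
    rw [Function.onFun, Finset.disjoint_left]
    intro x hx hx'
    have h1 : x ∈ c := by
      rw [mem_chord_iff]
      simpa using hx
    have h2 : x ∈ c' := by
      rw [mem_chord_iff]
      simpa using hx'
    exact hF.2.1 c hc c' hc' hne x h1 h2

/-! ### building reductions -/

lemma isReduction_of_forall {S : Finset ℕ} (m : MatchingOn S) :
    ∀ (L : List (Sym2 ℕ)) (P : Finset (Sym2 ℕ)),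
      (∀ p c q, L = p ++ c :: q → removable m (P ∪ p.toFinset) c) → IsReduction m P L := by
  intro L
  induction L with
  | nil => intro P _; exact IsReduction.nil P
  | cons c L ih =>
    intro P h
    have h0 : removable m P c := by
      have := h [] c L rfl
      simpa using this
    refine IsReduction.cons P c L h0 (ih (insert c P) ?_)
    intro p' c' q' he
    have := h (c :: p') c' q' (by rw [he]; simp)
    have hset : P ∪ (c :: p').toFinset = insert c P ∪ p'.toFinset := by
      ext x; simp only [List.toFinset_cons, Finset.mem_union, Finset.mem_insert]; tauto
    rwa [hset] at this

lemma reduction_of_fam {N : ℕ} {m : MatchingOn (Finset.Icc 1 N)} {LU : List (Sym2 ℕ)}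
    (hnd : LU.Nodup) (hF : Fam LU.toFinset) (hsub : ∀ c ∈ LU, c ∈ m.chords)
    (hsorted : LU.Pairwise (fun c d => chordHi c < chordHi d)) : IsReduction m ∅ LU := by
  apply isReduction_of_forall
  intro p c q hL
  have hcLU : c ∈ LU := by rw [hL]; exact List.mem_append_right p ((List.mem_cons_self (a := c) (l := q)))
  rw [Finset.empty_union]
  refine ⟨hsub c hcLU, ?_, ?_⟩
  · intro hcp
    rw [hL] at hnd
    exact (List.disjoint_of_nodup_append hnd) (List.mem_toFinset.1 hcp) ((List.mem_cons_self (a := c) (l := q)))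
  · rw [btwnFree_iff]
    rintro x ⟨hxIcc, hxns⟩ ⟨hx1, hx2⟩
    apply hxns
    obtain ⟨c', hc', hxc', _, hhic'⟩ :=
      hF.2.2 c (List.mem_toFinset.2 hcLU) x hx1 hx2
    have hc'LU : c' ∈ LU := List.mem_toFinset.1 hc'
    rw [hL] at hc'LU hsorted
    obtain ⟨_, hpw2, hcross⟩ := List.pairwise_append.1 hsorted
    rcases List.mem_append.1 hc'LU with hc'p | hc'cq
    · exact ⟨c', List.mem_toFinset.2 hc'p, hxc'⟩
    · exfalso
      rcases List.mem_cons.1 hc'cq with rfl | hc'q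
      · omega
      · have := (List.pairwise_cons.1 hpw2).1 c' hc'q
        omega


/-! ### enumeration of a finite set -/

noncomputable def fwdEnum (T : Finset ℕ) : ℕ → ℕ := fun x =>
  if h : x ∈ T then ((T.orderIsoOfFin rfl).symm ⟨x, h⟩).val + 1 else 0

noncomputable def bwdEnum (T : Finset ℕ) : ℕ → ℕ := fun j =>
  if h : 1 ≤ j ∧ j ≤ T.card then ((T.orderIsoOfFin rfl) ⟨j - 1, by omega⟩ : ℕ) else 0

lemma fwdEnum_mem {T : Finset ℕ} {x : ℕ} (hx : x ∈ T) :
    fwdEnum T x ∈ Finset.Icc 1 T.card := by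
  rw [fwdEnum, dif_pos hx, Finset.mem_Icc]
  have := ((T.orderIsoOfFin rfl).symm ⟨x, hx⟩).isLt
  omega

lemma fwdEnum_strictMonoOn {T : Finset ℕ} {x y : ℕ} (hx : x ∈ T) (hy : y ∈ T)
    (hxy : x < y) : fwdEnum T x < fwdEnum T y := by
  simp only [fwdEnum, dif_pos hx, dif_pos hy]
  have : (T.orderIsoOfFin rfl).symm ⟨x, hx⟩ < (T.orderIsoOfFin rfl).symm ⟨y, hy⟩ := by
    rw [OrderIso.lt_iff_lt]
    exact_mod_cast hxy
  have := Fin.lt_iff_val_lt_val.1 this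
  omega

lemma bwdEnum_mem {T : Finset ℕ} {j : ℕ} (hj : j ∈ Finset.Icc 1 T.card) :
    bwdEnum T j ∈ T := by
  rw [Finset.mem_Icc] at hj
  rw [bwdEnum, dif_pos hj]
  exact ((T.orderIsoOfFin rfl) ⟨j - 1, by omega⟩).2

lemma bwd_fwd_s14 {T : Finset ℕ} {x : ℕ} (hx : x ∈ T) : bwdEnum T (fwdEnum T x) = x := by
  have hmem := fwdEnum_mem hx
  rw [Finset.mem_Icc] at hmem
  simp only [bwdEnum, dif_pos hmem]
  have harg : (⟨fwdEnum T x - 1, by omega⟩ : Fin T.card) = (T.orderIsoOfFin rfl).symm ⟨x, hx⟩ := by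
    apply Fin.ext
    simp only [fwdEnum, dif_pos hx]
    omega
  rw [harg, OrderIso.apply_symm_apply]

lemma fwd_bwd_s14 {T : Finset ℕ} {j : ℕ} (hj : j ∈ Finset.Icc 1 T.card) :
    fwdEnum T (bwdEnum T j) = j := by
  rw [Finset.mem_Icc] at hj
  rw [bwdEnum, dif_pos hj]
  have hmem := ((T.orderIsoOfFin rfl) ⟨j - 1, by omega⟩).2
  rw [fwdEnum, dif_pos hmem]
  have : (⟨((T.orderIsoOfFin rfl) ⟨j - 1, by omega⟩ : ℕ), hmem⟩ : {x // x ∈ T})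
      = (T.orderIsoOfFin rfl) ⟨j - 1, by omega⟩ := rfl
  rw [this, OrderIso.symm_apply_apply]
  show j - 1 + 1 = j
  omega

lemma bwdEnum_strictMonoOn {T : Finset ℕ} {i j : ℕ} (hi : i ∈ Finset.Icc 1 T.card)
    (hj : j ∈ Finset.Icc 1 T.card) (hij : i < j) : bwdEnum T i < bwdEnum T j := by
  rw [Finset.mem_Icc] at hi hj
  rw [bwdEnum, dif_pos hi, bwdEnum, dif_pos hj]
  have : (T.orderIsoOfFin rfl) ⟨i - 1, by omega⟩ < (T.orderIsoOfFin rfl) ⟨j - 1, by omega⟩ := by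
    rw [OrderIso.lt_iff_lt]
    exact Fin.lt_iff_val_lt_val.2 (by simp; omega)
  exact_mod_cast this

lemma fwdEnum_bijOn (T : Finset ℕ) :
    Set.BijOn (fwdEnum T) ↑T ↑(Finset.Icc 1 T.card) := by
  refine ⟨fun x hx => fwdEnum_mem hx, ?_, ?_⟩
  · intro x hx y hy hxy
    rcases lt_trichotomy x y with h | h | h
    · exact absurd hxy (ne_of_lt (fwdEnum_strictMonoOn hx hy h))
    · exact h
    · exact absurd hxy.symm (ne_of_lt (fwdEnum_strictMonoOn hy hx h))
  · intro j hj
    exact ⟨bwdEnum T j, bwdEnum_mem hj, fwd_bwd_s14 hj⟩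


/-! ### the forward data -/

theorem MatchingOn.ext' {S : Finset ℕ} {m m' : MatchingOn S} (h : m.chords = m'.chords) :
    m = m' := by
  cases m; cases m'; simpa using h

lemma epF_card_eq {U : Finset (Sym2 ℕ)} (hd : ∀ c ∈ U, ¬ c.IsDiag)
    (hdisj : ∀ c ∈ U, ∀ c' ∈ U, c ≠ c' → ∀ x ∈ c, x ∉ c') : (epF U).card = 2 * U.card := by
  rw [epF, Finset.card_biUnion]
  · rw [Finset.sum_congr rfl (fun c hc => ?_), Finset.sum_const, smul_eq_mul, mul_comm]
    rw [Finset.card_insert_of_notMem (by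
      simp only [Finset.mem_singleton]
      exact fun he => absurd (chordLo_lt_hi (hd c hc)) (by omega))]
    simp
  · intro c hc c' hc' hne
    rw [Function.onFun, Finset.disjoint_left]
    intro x hx hx'
    have h1 : x ∈ c := by rw [mem_chord_iff]; simpa using hx
    have h2 : x ∈ c' := by rw [mem_chord_iff]; simpa using hx'
    exact hdisj c hc c' hc' hne x h1 h2

variable {N : ℕ}

noncomputable def redList (m : MatchingOn (Finset.Icc 1 N)) : List (Sym2 ℕ) :=
  (exists_maximal m).choose

lemma redList_max (m : MatchingOn (Finset.Icc 1 N)) : IsMaximalReduction m (redList m) :=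
  (exists_maximal m).choose_spec

noncomputable def Um (m : MatchingOn (Finset.Icc 1 N)) : Finset (Sym2 ℕ) :=
  (redList m).toFinset

noncomputable def kOf (m : MatchingOn (Finset.Icc 1 N)) : ℕ := (Um m).card

noncomputable def Rof (m : MatchingOn (Finset.Icc 1 N)) : Finset ℕ := (Um m).image chordHi

noncomputable def stabOf (m : MatchingOn (Finset.Icc 1 N)) : Finset ℕ :=
  Finset.Icc 1 N \ epF (Um m)

section Forward
variable {m : MatchingOn (Finset.Icc 1 N)}

lemma Um_eq_of_max {L : List (Sym2 ℕ)} (hL : IsMaximalReduction m L) :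
    L.toFinset = Um m := maximal_toFinset_eq hL (redList_max m)

lemma Um_sub : Um m ⊆ m.chords := fun c hc =>
  isReduction_mem_chords (redList_max m).1 c (List.mem_toFinset.1 hc)

lemma fam_Um : Fam (Um m) := fam_of_reduction (redList_max m).1

lemma stab_dichotomy {c : Sym2 ℕ} (hc : c ∈ m.chords) (hcU : c ∉ Um m) :
    ∀ x ∈ c, x ∈ stabOf m := by
  intro x hx
  rw [stabOf, Finset.mem_sdiff]
  refine ⟨m.mem_support c hc x hx, ?_⟩
  intro hmem
  obtain ⟨c', hc', hxc'⟩ := mem_epF.1 hmem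
  have hc'm : c' ∈ m.chords := Um_sub hc'
  have hne : c ≠ c' := fun he => hcU (he ▸ hc')
  exact m.disj c hc c' hc'm hne x hx hxc'

lemma epF_Um_sub : epF (Um m) ⊆ Finset.Icc 1 N := by
  intro x hx
  obtain ⟨c, hc, hxc⟩ := mem_epF.1 hx
  exact m.mem_support c (Um_sub hc) x hxc

lemma epF_Um_card : (epF (Um m)).card = 2 * kOf m :=
  epF_card_eq (fun c hc => (fam_Um).1 c hc) (fun c hc c' hc' => (fam_Um).2.1 c hc c' hc')

lemma two_k_le : 2 * kOf m ≤ N := by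
  have h1 := Finset.card_le_card (epF_Um_sub (m := m))
  rw [epF_Um_card, Nat.card_Icc] at h1
  omega

lemma stab_card : (stabOf m).card = N - 2 * kOf m := by
  rw [stabOf, Finset.card_sdiff_of_subset epF_Um_sub, epF_Um_card, Nat.card_Icc]
  omega

lemma Rof_card : (Rof m).card = kOf m := by
  rw [Rof, Finset.card_image_of_injOn (fun c hc c' hc' h => fam_hi_inj fam_Um hc hc' h)]
  rfl

lemma chord_bounds {c : Sym2 ℕ} (hc : c ∈ m.chords) :
    1 ≤ chordLo c ∧ chordLo c < chordHi c ∧ chordHi c ≤ N := by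
  have h1 := m.mem_support c hc _ (chordLo_mem c)
  have h2 := m.mem_support c hc _ (chordHi_mem c)
  rw [Finset.mem_Icc] at h1 h2
  have := chordLo_lt_hi (m.not_diag c hc)
  omega

lemma ballot_Rof : Ballot N (Rof m) := by
  constructor
  · intro b hb
    obtain ⟨c, hc, rfl⟩ := Finset.mem_image.1 hb
    have := chord_bounds (Um_sub hc)
    rw [Finset.mem_Icc]
    omega
  · intro t
    set V := (Um m).filter (fun c => chordHi c ≤ t) with hV
    have hVsub : V ⊆ Um m := Finset.filter_subset _ _
    have h1 : (epF V).card = 2 * V.card :=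
      epF_card_eq (fun c hc => (fam_Um).1 c (hVsub hc))
        (fun c hc c' hc' => (fam_Um).2.1 c (hVsub hc) c' (hVsub hc'))
    have hsub : epF V ⊆ Finset.Icc 1 t := by
      intro x hx
      obtain ⟨c, hc, hxc⟩ := mem_epF.1 hx
      have hb := chord_bounds (Um_sub (hVsub hc))
      have hct : chordHi c ≤ t := by
        have := (Finset.mem_filter.1 hc).2; simpa using this
      rw [Finset.mem_Icc]
      rcases mem_chord_iff.1 hxc with rfl | rfl <;> omega
    have h2 : (epF V).card ≤ t := by
      have := Finset.card_le_card hsub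
      rwa [Nat.card_Icc, Nat.add_sub_cancel] at this
    have h3 : Rof m ∩ Finset.Icc 1 t = V.image chordHi := by
      ext b
      simp only [Finset.mem_inter, Finset.mem_image, Finset.mem_Icc, Rof, hV,
        Finset.mem_filter]
      constructor
      · rintro ⟨⟨c, hc, rfl⟩, h1', h2'⟩
        exact ⟨c, ⟨hc, h2'⟩, rfl⟩
      · rintro ⟨c, ⟨hc, hct⟩, rfl⟩
        have := chord_bounds (Um_sub hc)
        exact ⟨⟨c, hc, rfl⟩, by omega, hct⟩
    have h4 : (V.image chordHi).card = V.card :=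
      Finset.card_image_of_injOn
        (fun c hc c' hc' h => fam_hi_inj fam_Um (hVsub hc) (hVsub hc') h)
    rw [h3, h4]
    omega

end Forward


/-! ### the core matching -/

section Forward2
variable {N : ℕ}

lemma surv_eq (m : MatchingOn (Finset.Icc 1 N)) :
    (↑(Finset.Icc 1 N) : Set ℕ) \ endpointSet (Um m) = ↑(stabOf m) := by
  rw [stabOf, Finset.coe_sdiff, coe_epF]

noncomputable def coreOf (m : MatchingOn (Finset.Icc 1 N)) :
    MatchingOn (Finset.Icc 1 (N - 2 * kOf m)) where
  chords := (m.chords \ Um m).image (Sym2.map (fwdEnum (stabOf m)))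
  not_diag := by
    intro c' hc'
    obtain ⟨c, hc, rfl⟩ := Finset.mem_image.1 hc'
    rw [Finset.mem_sdiff] at hc
    have hlo := stab_dichotomy hc.1 hc.2 _ (chordLo_mem c)
    have hhi := stab_dichotomy hc.1 hc.2 _ (chordHi_mem c)
    rw [chord_eq c, Sym2.map_pair_eq, Sym2.mk_isDiag_iff]
    have := chordLo_lt_hi (m.not_diag c hc.1)
    exact ne_of_lt (fwdEnum_strictMonoOn hlo hhi this)
  mem_support := by
    intro c' hc' x hx
    obtain ⟨c, hc, rfl⟩ := Finset.mem_image.1 hc'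
    rw [Finset.mem_sdiff] at hc
    obtain ⟨y, hy, rfl⟩ := Sym2.mem_map.1 hx
    have hys := stab_dichotomy hc.1 hc.2 _ hy
    have := fwdEnum_mem hys
    rwa [stab_card] at this
  disj := by
    intro c1' hc1' c2' hc2' hne x hx1 hx2
    obtain ⟨c1, hc1, rfl⟩ := Finset.mem_image.1 hc1'
    obtain ⟨c2, hc2, rfl⟩ := Finset.mem_image.1 hc2'
    rw [Finset.mem_sdiff] at hc1 hc2
    obtain ⟨y1, hy1, rfl⟩ := Sym2.mem_map.1 hx1
    obtain ⟨y2, hy2, hy12⟩ := Sym2.mem_map.1 hx2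
    have hs1 := stab_dichotomy hc1.1 hc1.2 _ hy1
    have hs2 := stab_dichotomy hc2.1 hc2.2 _ hy2
    have hyy : y2 = y1 := (fwdEnum_bijOn (stabOf m)).2.1 hs2 hs1 hy12
    have hcc : c1 ≠ c2 := fun he => hne (by rw [he])
    exact m.disj c1 hc1.1 c2 hc2.1 hcc y1 hy1 (hyy ▸ hy2)

variable {m : MatchingOn (Finset.Icc 1 N)}

lemma mem_Um_of_hi {c : Sym2 ℕ} (hc : c ∈ m.chords) (h : chordHi c ∈ epF (Um m)) :
    c ∈ Um m := by
  by_contra hcU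
  have := stab_dichotomy hc hcU _ (chordHi_mem c)
  rw [stabOf, Finset.mem_sdiff] at this
  exact this.2 h

lemma stable_chord_not_Um {a b : ℕ} (ha : a ∈ stabOf m) (hc : s(a,b) ∈ m.chords) :
    s(a,b) ∉ Um m := by
  intro hU
  rw [stabOf, Finset.mem_sdiff] at ha
  exact ha.2 (mem_epF.2 ⟨_, hU, Sym2.mem_mk_left a b⟩)

lemma core_mem_iff {a b : ℕ} (ha : a ∈ stabOf m) (hb : b ∈ stabOf m) :
    s(a, b) ∈ m.chords ↔
      s(fwdEnum (stabOf m) a, fwdEnum (stabOf m) b) ∈ (coreOf m).chords := by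
  constructor
  · intro h
    have hnU := stable_chord_not_Um ha h
    have : Sym2.map (fwdEnum (stabOf m)) s(a,b) ∈ (coreOf m).chords :=
      Finset.mem_image_of_mem _ (Finset.mem_sdiff.2 ⟨h, hnU⟩)
    rwa [Sym2.map_pair_eq] at this
  · intro h
    obtain ⟨c, hc, hmap⟩ := Finset.mem_image.1 h
    rw [Finset.mem_sdiff] at hc
    have hu := stab_dichotomy hc.1 hc.2 _ (chordLo_mem c)
    have hv := stab_dichotomy hc.1 hc.2 _ (chordHi_mem c)
    rw [chord_eq c, Sym2.map_pair_eq] at hmap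
    have hinj := (fwdEnum_bijOn (stabOf m)).2.1
    rcases (Sym2.mk_eq_mk_iff (p := (_, _)) (q := (_, _))).1 hmap with he | he <;>
      simp only [Prod.mk.injEq, Prod.swap_prod_mk] at he
    · obtain ⟨h1, h2⟩ := he
      have hca : chordLo c = a := hinj hu ha h1
      have hcb : chordHi c = b := hinj hv hb h2
      rw [← hca, ← hcb, ← chord_eq c]
      exact hc.1
    · obtain ⟨h1, h2⟩ := he
      have hca : chordLo c = b := hinj hu hb h1
      have hcb : chordHi c = a := hinj hv ha h2
      rw [Sym2.eq_swap, ← hca, ← hcb, ← chord_eq c]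
      exact hc.1

lemma coreOf_scf : ShortChordFree (coreOf m) := by
  intro i hi
  obtain ⟨c, hc, hmap⟩ := Finset.mem_image.1 hi
  rw [Finset.mem_sdiff] at hc
  have hu := stab_dichotomy hc.1 hc.2 _ (chordLo_mem c)
  have hv := stab_dichotomy hc.1 hc.2 _ (chordHi_mem c)
  have hlt := chordLo_lt_hi (m.not_diag c hc.1)
  rw [chord_eq c, Sym2.map_pair_eq] at hmap
  have hmono := fwdEnum_strictMonoOn hu hv hlt
  have he : fwdEnum (stabOf m) (chordLo c) = i ∧ fwdEnum (stabOf m) (chordHi c) = i + 1 := by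
    rcases (Sym2.mk_eq_mk_iff (p := (fwdEnum (stabOf m) (chordLo c), fwdEnum (stabOf m) (chordHi c)))
        (q := (i, i + 1))).1 hmap with he | he <;>
      simp only [Prod.mk.injEq, Prod.swap_prod_mk] at he <;> omega
  have hrem : removable m (Um m) c := by
    refine ⟨hc.1, hc.2, ?_⟩
    rw [btwnFree_iff]
    rintro x hx ⟨hx1, hx2⟩
    rw [surv_eq] at hx
    have hxs : x ∈ stabOf m := hx
    have g1 := fwdEnum_strictMonoOn hu hxs hx1
    have g2 := fwdEnum_strictMonoOn hxs hv hx2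
    omega
  exact (redList_max m).2 c hrem

lemma coreOf_unmatched : unmatchedCard (coreOf m) = unmatchedCard m := by
  have hset : (↑(Finset.Icc 1 (N - 2 * kOf m)) : Set ℕ) \ endpointSet (coreOf m).chords
      = fwdEnum (stabOf m) '' ((↑(Finset.Icc 1 N) : Set ℕ) \ endpointSet m.chords) := by
    ext j
    constructor
    · rintro ⟨hj1, hj2⟩
      have hjIcc : j ∈ Finset.Icc 1 (stabOf m).card := by
        rw [stab_card]; exact_mod_cast hj1
      set x := bwdEnum (stabOf m) j with hx
      have hxs : x ∈ stabOf m := bwdEnum_mem hjIcc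
      have hxI : x ∈ Finset.Icc 1 N := (Finset.mem_sdiff.1 hxs).1
      refine ⟨x, ⟨by exact_mod_cast hxI, ?_⟩, fwd_bwd_s14 hjIcc⟩
      rintro ⟨c, hcm, hxc⟩
      have hcU : c ∉ Um m := by
        intro hU
        exact (Finset.mem_sdiff.1 hxs).2 (mem_epF.2 ⟨c, hU, hxc⟩)
      apply hj2
      refine ⟨Sym2.map (fwdEnum (stabOf m)) c,
        Finset.mem_image_of_mem _ (Finset.mem_sdiff.2 ⟨hcm, hcU⟩), ?_⟩
      rw [Sym2.mem_map]
      exact ⟨x, hxc, fwd_bwd_s14 hjIcc⟩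
    · rintro ⟨x, ⟨hxI, hxum⟩, rfl⟩
      have hxs : x ∈ stabOf m := by
        rw [stabOf, Finset.mem_sdiff]
        refine ⟨by exact_mod_cast hxI, fun hmem => ?_⟩
        obtain ⟨c, hc, hxc⟩ := mem_epF.1 hmem
        exact hxum ⟨c, Um_sub hc, hxc⟩
      constructor
      · have := fwdEnum_mem hxs
        rw [stab_card] at this
        exact_mod_cast this
      · rintro ⟨c', hc', hxc'⟩
        obtain ⟨c, hc, rfl⟩ := Finset.mem_image.1 hc'
        rw [Finset.mem_sdiff] at hc
        obtain ⟨y, hy, hyx⟩ := Sym2.mem_map.1 hxc'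
        have hys := stab_dichotomy hc.1 hc.2 _ hy
        have : y = x := (fwdEnum_bijOn (stabOf m)).2.1 hys hxs hyx
        exact hxum ⟨c, hc.1, this ▸ hy⟩
  rw [unmatchedCard, unmatchedCard, hset]
  apply Set.ncard_image_of_injOn
  intro x hx y hy hxy
  have hxs : x ∈ stabOf m := by
    rw [stabOf, Finset.mem_sdiff]
    exact ⟨by exact_mod_cast hx.1, fun hmem => hx.2 (by
      obtain ⟨c, hc, hxc⟩ := mem_epF.1 hmem
      exact ⟨c, Um_sub hc, hxc⟩)⟩
  have hys : y ∈ stabOf m := by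
    rw [stabOf, Finset.mem_sdiff]
    exact ⟨by exact_mod_cast hy.1, fun hmem => hy.2 (by
      obtain ⟨c, hc, hxc⟩ := mem_epF.1 hmem
      exact ⟨c, Um_sub hc, hxc⟩)⟩
  exact (fwdEnum_bijOn (stabOf m)).2.1 hxs hys hxy

lemma Rof_syt : IsTwoRowSYT (N - kOf m) (kOf m) (Rof m) := by
  have h2k := two_k_le (m := m)
  refine ⟨by omega, ?_, Rof_card, (ballot_Rof).2⟩
  have : N - kOf m + kOf m = N := by omega
  rw [this]
  exact (ballot_Rof).1

lemma maximal_length {L : List (Sym2 ℕ)} (hL : IsMaximalReduction m L) :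
    L.length = kOf m := by
  show L.length = (Um m).card
  rw [← Um_eq_of_max hL, List.card_toFinset, (isReduction_nodup hL.1).dedup]

lemma coreVia_of_max {L : List (Sym2 ℕ)} (hL : IsMaximalReduction m L) :
    IsCoreVia m L (coreOf m) := by
  have hstab : stableSet N L = ↑(stabOf m) := by
    rw [stableSet, Um_eq_of_max hL, surv_eq]
  refine ⟨fwdEnum (stabOf m), ?_, ?_, ?_⟩
  · rw [hstab]
    have := fwdEnum_bijOn (stabOf m)
    rwa [stab_card] at this
  · intro x hx y hy hxy
    rw [hstab] at hx hy
    exact fwdEnum_strictMonoOn hx hy hxy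
  · intro a b ha hb
    rw [hstab] at ha hb
    exact core_mem_iff ha hb

lemma Rof_set_eq {L : List (Sym2 ℕ)} (hL : IsMaximalReduction m L) :
    (↑(Rof m) : Set ℕ) = {j | ∃ a, a < j ∧ s(a, j) ∈ L.toFinset} := by
  rw [Um_eq_of_max hL]
  ext j
  simp only [Finset.coe_image, Set.mem_image, Finset.mem_coe, Set.mem_setOf_eq, Rof]
  constructor
  · rintro ⟨c, hc, rfl⟩
    have hb := chord_bounds (Um_sub hc)
    exact ⟨chordLo c, hb.2.1, by rw [← chord_eq c]; exact hc⟩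
  · rintro ⟨a, haj, hc⟩
    refine ⟨s(a, j), hc, (mk_mem_chords_lo_hi haj).2⟩

end Forward2


/-! ### the inverse map -/

noncomputable def gStab (N : ℕ) (R : Finset ℕ) : Finset ℕ :=
  Finset.Icc 1 N \ epF (famOf N R)

section Gside
variable {N k : ℕ} {R : Finset ℕ}

lemma syt_two_k_le (hsyt : IsTwoRowSYT (N - k) k R) : 2 * k ≤ N := by
  have := hsyt.1; omega

lemma syt_ballot (hsyt : IsTwoRowSYT (N - k) k R) : Ballot N R := by
  refine ⟨?_, hsyt.2.2.2⟩
  have h := hsyt.2.1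
  have h2 := syt_two_k_le hsyt
  rwa [show N - k + k = N by omega] at h

lemma epF_famOf_sub (hB : Ballot N R) : epF (famOf N R) ⊆ Finset.Icc 1 N := by
  intro x hx
  obtain ⟨c, hc, hxc⟩ := mem_epF.1 hx
  exact famOf_support hB hc x hxc

lemma epF_famOf_card (hB : Ballot N R) : (epF (famOf N R)).card = 2 * R.card := by
  rw [epF_card_eq (fam_famOf hB).1 (fam_famOf hB).2.1, famOf_card hB]

lemma gStab_card (hsyt : IsTwoRowSYT (N - k) k R) : (gStab N R).card = N - 2 * k := by
  have hB := syt_ballot hsyt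
  rw [gStab, Finset.card_sdiff_of_subset (epF_famOf_sub hB), Nat.card_Icc, epF_famOf_card hB,
    hsyt.2.2.1]
  omega

lemma gSurv_eq (R : Finset ℕ) :
    (↑(Finset.Icc 1 N) : Set ℕ) \ endpointSet (famOf N R) = ↑(gStab N R) := by
  rw [gStab, Finset.coe_sdiff, coe_epF]

variable (m0 : MatchingOn (Finset.Icc 1 (N - 2 * k)))

lemma transplant_endpoint_Icc (hsyt : IsTwoRowSYT (N - k) k R) {c0 : Sym2 ℕ}
    (hc0 : c0 ∈ m0.chords) {y : ℕ} (hy : y ∈ c0) : y ∈ Finset.Icc 1 (gStab N R).card := by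
  rw [gStab_card hsyt]
  exact m0.mem_support c0 hc0 y hy

noncomputable def GMatch (hsyt : IsTwoRowSYT (N - k) k R) : MatchingOn (Finset.Icc 1 N) where
  chords := famOf N R ∪ m0.chords.image (Sym2.map (bwdEnum (gStab N R)))
  not_diag := by
    intro c hc
    rcases Finset.mem_union.1 hc with hc | hc
    · exact (fam_famOf (syt_ballot hsyt)).1 c hc
    · obtain ⟨c0, hc0, rfl⟩ := Finset.mem_image.1 hc
      rw [chord_eq c0, Sym2.map_pair_eq, Sym2.mk_isDiag_iff]
      refine ne_of_lt (bwdEnum_strictMonoOn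
        (transplant_endpoint_Icc m0 hsyt hc0 (chordLo_mem c0))
        (transplant_endpoint_Icc m0 hsyt hc0 (chordHi_mem c0))
        (chordLo_lt_hi (m0.not_diag c0 hc0)))
  mem_support := by
    intro c hc x hx
    rcases Finset.mem_union.1 hc with hc | hc
    · exact famOf_support (syt_ballot hsyt) hc x hx
    · obtain ⟨c0, hc0, rfl⟩ := Finset.mem_image.1 hc
      obtain ⟨y, hy, rfl⟩ := Sym2.mem_map.1 hx
      have := bwdEnum_mem (transplant_endpoint_Icc m0 hsyt hc0 hy)
      rw [gStab, Finset.mem_sdiff] at this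
      exact this.1
  disj := by
    have hstabmem : ∀ {c0 : Sym2 ℕ}, c0 ∈ m0.chords → ∀ x ∈ Sym2.map (bwdEnum (gStab N R)) c0,
        x ∈ gStab N R := by
      intro c0 hc0 x hx
      obtain ⟨y, hy, rfl⟩ := Sym2.mem_map.1 hx
      exact bwdEnum_mem (transplant_endpoint_Icc m0 hsyt hc0 hy)
    have hfammem : ∀ {c : Sym2 ℕ}, c ∈ famOf N R → ∀ x ∈ c, x ∉ gStab N R := by
      intro c hc x hx hxs
      rw [gStab, Finset.mem_sdiff] at hxs
      exact hxs.2 (mem_epF.2 ⟨c, hc, hx⟩)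
    intro c hc c' hc' hne x hx hx'
    rcases Finset.mem_union.1 hc with hc1 | hc1 <;> rcases Finset.mem_union.1 hc' with hc2 | hc2
    · exact (fam_famOf (syt_ballot hsyt)).2.1 c hc1 c' hc2 hne x hx hx'
    · obtain ⟨c0, hc0, rfl⟩ := Finset.mem_image.1 hc2
      exact hfammem hc1 x hx (hstabmem hc0 x hx')
    · obtain ⟨c0, hc0, rfl⟩ := Finset.mem_image.1 hc1
      exact hfammem hc2 x hx' (hstabmem hc0 x hx)
    · obtain ⟨c1, hc01, rfl⟩ := Finset.mem_image.1 hc1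
      obtain ⟨c2, hc02, rfl⟩ := Finset.mem_image.1 hc2
      obtain ⟨y1, hy1, rfl⟩ := Sym2.mem_map.1 hx
      obtain ⟨y2, hy2, hyy⟩ := Sym2.mem_map.1 hx'
      have hI1 := transplant_endpoint_Icc m0 hsyt hc01 hy1
      have hI2 := transplant_endpoint_Icc m0 hsyt hc02 hy2
      have : y2 = y1 := by
        have := congrArg (fwdEnum (gStab N R)) hyy
        rwa [fwd_bwd_s14 hI2, fwd_bwd_s14 hI1] at this
      subst this
      have hcc : c1 ≠ c2 := fun he => hne (by rw [he])
      exact m0.disj c1 hc01 c2 hc02 hcc y2 hy1 hy2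

lemma famList_sorted_hi (hB : Ballot N R) :
    (famList N R).Pairwise (fun c d => chordHi c < chordHi d) := by
  rw [famList, List.pairwise_map]
  have h1 : ((thePairs N R).map Prod.snd).Pairwise (· < ·) := by
    rw [(thePairs_spec hB).1]; exact List.sortedLT_iff_pairwise.1 (Finset.sortedLT_sort R)
  rw [List.pairwise_map] at h1
  refine h1.imp_of_mem ?_
  intro p q hp hq h
  rw [(famList_lo_hi hB hp).2, (famList_lo_hi hB hq).2]
  exact h

lemma GMatch_maxred (hsyt : IsTwoRowSYT (N - k) k R) (hscf : ShortChordFree m0) :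
    IsMaximalReduction (GMatch m0 hsyt) (famList N R) := by
  have hB := syt_ballot hsyt
  constructor
  · refine reduction_of_fam (famList_nodup hB) ?_ ?_ (famList_sorted_hi hB)
    · exact fam_famOf hB
    · intro c hc
      exact Finset.mem_union_left _ (List.mem_toFinset.2 hc)
  · intro c hrem
    obtain ⟨hcm, hcU, hbf⟩ := hrem
    have hcfam : c ∉ famOf N R := hcU
    rcases Finset.mem_union.1 hcm with hc1 | hc1
    · exact hcfam hc1
    · obtain ⟨c0, hc0, rfl⟩ := Finset.mem_image.1 hc1
      set i := chordLo c0 with hi_def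
      set j := chordHi c0 with hj_def
      have hij : i < j := chordLo_lt_hi (m0.not_diag c0 hc0)
      have hIi := transplant_endpoint_Icc m0 hsyt hc0 (chordLo_mem c0)
      have hIj := transplant_endpoint_Icc m0 hsyt hc0 (chordHi_mem c0)
      have hxy : bwdEnum (gStab N R) i < bwdEnum (gStab N R) j := bwdEnum_strictMonoOn hIi hIj hij
      have hmapc : Sym2.map (bwdEnum (gStab N R)) c0
          = s(bwdEnum (gStab N R) i, bwdEnum (gStab N R) j) := by
        rw [chord_eq c0, Sym2.map_pair_eq]
      have hlo : chordLo (Sym2.map (bwdEnum (gStab N R)) c0) = bwdEnum (gStab N R) i := by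
        rw [hmapc]; exact (mk_mem_chords_lo_hi hxy).1
      have hhi : chordHi (Sym2.map (bwdEnum (gStab N R)) c0) = bwdEnum (gStab N R) j := by
        rw [hmapc]; exact (mk_mem_chords_lo_hi hxy).2
      have hj1 : j = i + 1 := by
        by_contra hne
        have hi1 : i + 1 ∈ Finset.Icc 1 (gStab N R).card := by
          rw [Finset.mem_Icc] at hIi hIj ⊢
          omega
        have ht : bwdEnum (gStab N R) (i+1) ∈ gStab N R := bwdEnum_mem hi1
        rw [btwnFree_iff] at hbf
        refine hbf (bwdEnum (gStab N R) (i+1)) ⟨?_, ?_⟩ ?_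
        · have := ht; rw [gStab, Finset.mem_sdiff] at this
          exact_mod_cast this.1
        · intro hmem
          rw [show (famList N R).toFinset = famOf N R from rfl] at hmem
          obtain ⟨c', hc', hyc'⟩ := hmem
          rw [gStab, Finset.mem_sdiff] at ht
          exact ht.2 (mem_epF.2 ⟨c', hc', hyc'⟩)
        · rw [hlo, hhi]
          exact ⟨bwdEnum_strictMonoOn hIi hi1 (by omega),
            bwdEnum_strictMonoOn hi1 hIj (by omega)⟩
      apply hscf i
      have : c0 = s(i, i+1) := by rw [chord_eq c0, ← hi_def, ← hj_def, hj1]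
      rwa [this] at hc0

lemma GMatch_Um (hsyt : IsTwoRowSYT (N - k) k R) (hscf : ShortChordFree m0) :
    Um (GMatch m0 hsyt) = famOf N R :=
  (Um_eq_of_max (GMatch_maxred m0 hsyt hscf)).symm

lemma GMatch_kOf (hsyt : IsTwoRowSYT (N - k) k R) (hscf : ShortChordFree m0) :
    kOf (GMatch m0 hsyt) = k := by
  rw [kOf, GMatch_Um m0 hsyt hscf, famOf_card (syt_ballot hsyt), hsyt.2.2.1]

lemma GMatch_Rof (hsyt : IsTwoRowSYT (N - k) k R) (hscf : ShortChordFree m0) :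
    Rof (GMatch m0 hsyt) = R := by
  rw [Rof, GMatch_Um m0 hsyt hscf, famOf_image_hi (syt_ballot hsyt)]

lemma GMatch_stab (hsyt : IsTwoRowSYT (N - k) k R) (hscf : ShortChordFree m0) :
    stabOf (GMatch m0 hsyt) = gStab N R := by
  rw [stabOf, GMatch_Um m0 hsyt hscf, gStab]

lemma GMatch_core_chords (hsyt : IsTwoRowSYT (N - k) k R) (hscf : ShortChordFree m0) :
    (coreOf (GMatch m0 hsyt)).chords = m0.chords := by
  have hB := syt_ballot hsyt
  have hdisj : ∀ c ∈ m0.chords.image (Sym2.map (bwdEnum (gStab N R))), c ∉ famOf N R := by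
    intro c hc hcf
    obtain ⟨c0, hc0, rfl⟩ := Finset.mem_image.1 hc
    have h1 : chordHi (Sym2.map (bwdEnum (gStab N R)) c0) ∈ gStab N R := by
      obtain ⟨y, hy, he⟩ := Sym2.mem_map.1 (chordHi_mem (Sym2.map (bwdEnum (gStab N R)) c0))
      rw [← he]
      exact bwdEnum_mem (transplant_endpoint_Icc m0 hsyt hc0 hy)
    rw [gStab, Finset.mem_sdiff] at h1
    exact h1.2 (mem_epF.2 ⟨_, hcf, chordHi_mem _⟩)
  have hsd : (GMatch m0 hsyt).chords \ Um (GMatch m0 hsyt)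
      = m0.chords.image (Sym2.map (bwdEnum (gStab N R))) := by
    rw [GMatch_Um m0 hsyt hscf]
    ext c
    simp only [Finset.mem_sdiff, GMatch, Finset.mem_union]
    constructor
    · rintro ⟨h1 | h1, h2⟩
      · exact absurd h1 h2
      · exact h1
    · intro h
      exact ⟨Or.inr h, hdisj c h⟩
  show ((GMatch m0 hsyt).chords \ Um (GMatch m0 hsyt)).image
      (Sym2.map (fwdEnum (stabOf (GMatch m0 hsyt)))) = m0.chords
  rw [hsd, GMatch_stab m0 hsyt hscf, Finset.image_image]
  rw [show ((Sym2.map (fwdEnum (gStab N R))) ∘ (Sym2.map (bwdEnum (gStab N R))))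
      = fun c => Sym2.map ((fwdEnum (gStab N R)) ∘ (bwdEnum (gStab N R))) c from
    funext (fun c => Sym2.map_map c)]
  have : ∀ c0 ∈ m0.chords,
      Sym2.map ((fwdEnum (gStab N R)) ∘ (bwdEnum (gStab N R))) c0 = c0 := by
    intro c0 hc0
    rw [chord_eq c0, Sym2.map_pair_eq]
    simp only [Function.comp_apply]
    rw [fwd_bwd_s14 (transplant_endpoint_Icc m0 hsyt hc0 (chordLo_mem c0)),
      fwd_bwd_s14 (transplant_endpoint_Icc m0 hsyt hc0 (chordHi_mem c0))]
  calc m0.chords.image (fun c => Sym2.map ((fwdEnum (gStab N R)) ∘ (bwdEnum (gStab N R))) c)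
      = m0.chords.image id := Finset.image_congr (fun c hc => this c hc)
    _ = m0.chords := Finset.image_id

lemma unmatched_congr {S1 S2 : Finset ℕ} (h : S1 = S2) {m1 : MatchingOn S1}
    {m2 : MatchingOn S2} (hc : m1.chords = m2.chords) :
    unmatchedCard m1 = unmatchedCard m2 := by
  subst h
  rw [unmatchedCard, unmatchedCard, hc]

lemma GMatch_unmatched (hsyt : IsTwoRowSYT (N - k) k R) (hscf : ShortChordFree m0) :
    unmatchedCard (GMatch m0 hsyt) = unmatchedCard m0 := by
  rw [← coreOf_unmatched (m := GMatch m0 hsyt)]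
  exact unmatched_congr (by rw [GMatch_kOf m0 hsyt hscf]) (GMatch_core_chords m0 hsyt hscf)

end Gside


/-! ### round trips and assembly -/

section RoundTrip
variable {N : ℕ}

lemma GF_chords (m : MatchingOn (Finset.Icc 1 N))
    (hsyt : IsTwoRowSYT (N - kOf m) (kOf m) (Rof m)) :
    (GMatch (coreOf m) hsyt).chords = m.chords := by
  have hB : Ballot N (Rof m) := ballot_Rof
  have h1 : famOf N (Rof m) = Um m := by
    apply fam_unique (fam_famOf hB) fam_Um
    rw [famOf_image_hi hB, Rof]
  have h2 : gStab N (Rof m) = stabOf m := by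
    rw [gStab, stabOf, h1]
  show famOf N (Rof m) ∪ ((coreOf m).chords).image (Sym2.map (bwdEnum (gStab N (Rof m))))
      = m.chords
  rw [h1, h2]
  have h3 : ((coreOf m).chords).image (Sym2.map (bwdEnum (stabOf m))) = m.chords \ Um m := by
    show ((m.chords \ Um m).image (Sym2.map (fwdEnum (stabOf m)))).image
        (Sym2.map (bwdEnum (stabOf m))) = m.chords \ Um m
    rw [Finset.image_image]
    rw [show ((Sym2.map (bwdEnum (stabOf m))) ∘ (Sym2.map (fwdEnum (stabOf m))))
        = fun c => Sym2.map ((bwdEnum (stabOf m)) ∘ (fwdEnum (stabOf m))) c from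
      funext (fun c => Sym2.map_map c)]
    have : ∀ c ∈ m.chords \ Um m,
        Sym2.map ((bwdEnum (stabOf m)) ∘ (fwdEnum (stabOf m))) c = c := by
      intro c hc
      rw [Finset.mem_sdiff] at hc
      have hu := stab_dichotomy hc.1 hc.2 _ (chordLo_mem c)
      have hv := stab_dichotomy hc.1 hc.2 _ (chordHi_mem c)
      rw [chord_eq c, Sym2.map_pair_eq]
      simp only [Function.comp_apply]
      rw [bwd_fwd_s14 hu, bwd_fwd_s14 hv]
    calc (m.chords \ Um m).image (fun c => Sym2.map ((bwdEnum (stabOf m)) ∘ (fwdEnum (stabOf m))) c)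
        = (m.chords \ Um m).image id := Finset.image_congr (fun c hc => this c hc)
      _ = m.chords \ Um m := Finset.image_id
  rw [h3]
  exact Finset.union_sdiff_of_subset Um_sub

lemma sigma_eq_helper (N f : ℕ) {k k' : ℕ} (hkk : k = k')
    (m0 : MatchingOn (Finset.Icc 1 (N - 2 * k))) (m0' : MatchingOn (Finset.Icc 1 (N - 2 * k')))
    (R R' : Finset ℕ) (hRR : R = R') (hcc : m0.chords = m0'.chords)
    (h1 : ShortChordFree m0 ∧ unmatchedCard m0 = f ∧ IsTwoRowSYT (N - k) k R)
    (h2 : ShortChordFree m0' ∧ unmatchedCard m0' = f ∧ IsTwoRowSYT (N - k') k' R') :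
    (⟨k, ⟨(m0, R), h1⟩⟩ : Σ k : ℕ, {p : MatchingOn (Finset.Icc 1 (N - 2 * k)) × Finset ℕ //
        ShortChordFree p.1 ∧ unmatchedCard p.1 = f ∧ IsTwoRowSYT (N - k) k p.2})
      = ⟨k', ⟨(m0', R'), h2⟩⟩ := by
  subst hkk
  subst hRR
  have : m0 = m0' := MatchingOn.ext' hcc
  subst this
  rfl

end RoundTrip

noncomputable def Ffun (N f : ℕ)
    (ms : {m : MatchingOn (Finset.Icc 1 N) // unmatchedCard m = f}) :
    Σ k : ℕ, {p : MatchingOn (Finset.Icc 1 (N - 2 * k)) × Finset ℕ //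
      ShortChordFree p.1 ∧ unmatchedCard p.1 = f ∧ IsTwoRowSYT (N - k) k p.2} :=
  ⟨kOf ms.1, ⟨(coreOf ms.1, Rof ms.1),
    coreOf_scf, by rw [coreOf_unmatched]; exact ms.2, Rof_syt⟩⟩

noncomputable def Gfun (N f : ℕ)
    (x : Σ k : ℕ, {p : MatchingOn (Finset.Icc 1 (N - 2 * k)) × Finset ℕ //
      ShortChordFree p.1 ∧ unmatchedCard p.1 = f ∧ IsTwoRowSYT (N - k) k p.2}) :
    {m : MatchingOn (Finset.Icc 1 N) // unmatchedCard m = f} :=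
  ⟨GMatch x.2.1.1 x.2.2.2.2,
    by rw [GMatch_unmatched x.2.1.1 x.2.2.2.2 x.2.2.1]; exact x.2.2.2.1⟩


/-- The map `m ↦ (core m, T m)` is a bijection from the matchings on `[N]` with `f`
unmatched vertices to the union over `k` of (short-chord-free matchings on `[N-2k]`
with `f` unmatched vertices) × (SYTs of shape `(N-k, k)`): there is an equivalence
which, for every maximal reduction process `L` of `m`, sends `m` to its core via `L`
together with the two-row tableau whose second row is the set of larger endpoints of
the removed (unstable) chords. -/
theorem stmt14 (N f : ℕ) :
    ∃ e : {m : MatchingOn (Finset.Icc 1 N) // unmatchedCard m = f} ≃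
        (Σ k : ℕ, {p : MatchingOn (Finset.Icc 1 (N - 2 * k)) × Finset ℕ //
          ShortChordFree p.1 ∧ unmatchedCard p.1 = f ∧ IsTwoRowSYT (N - k) k p.2}),
      ∀ (m : {m : MatchingOn (Finset.Icc 1 N) // unmatchedCard m = f})
        (L : List (Sym2 ℕ)), IsMaximalReduction m.1 L →
          (e m).1 = L.length ∧ IsCoreVia m.1 L (e m).2.1.1 ∧
          ((e m).2.1.2 : Set ℕ) = {j | ∃ a, a < j ∧ s(a, j) ∈ L.toFinset} := by
  refine ⟨{ toFun := Ffun N f, invFun := Gfun N f, left_inv := ?_, right_inv := ?_ }, ?_⟩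
  · intro ms
    apply Subtype.ext
    apply MatchingOn.ext'
    exact GF_chords ms.1 Rof_syt
  · intro x
    obtain ⟨k, ⟨⟨m0, R⟩, hscf, hunm, hsyt⟩⟩ := x
    exact sigma_eq_helper N f (GMatch_kOf m0 hsyt hscf) _ m0 _ R
      (GMatch_Rof m0 hsyt hscf) (GMatch_core_chords m0 hsyt hscf) _ _
  · intro ms L hL
    refine ⟨(maximal_length hL).symm, coreVia_of_max hL, Rof_set_eq hL⟩
end
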